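/- arXiv:1303.5670 — 11 statements merged into one kernel-verified Lean document; each statement's English description precedes it below -/
import Mathlib

section
/- A nonnegative matrix M ∈ ℝ₊^{p×q} is a slack matrix of a polyhedral cone if and only if M satisfies the row cone generating condition (RCGC), i.e., the cone generated by the rows of M coincides with the intersection of the row span of M with the nonnegative orthant: ℝ₊^p·M = (ℝ^p·M) ∩ ℝ₊^q. -/
open Matrix Set

/-- The cone generated by the rows of the matrix `A`, i.e. the set of all
nonnegative linear combinations of the rows of `A`. -/
def coneOfRows {p n : ℕ} (A : Matrix (Fin p) (Fin n) ℝ) : Set (Fin n → ℝ) :=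
  {x | ∃ y : Fin p → ℝ, 0 ≤ y ∧ x = Matrix.vecMul y A}

/-- `M` is the slack matrix of the polyhedral cone `K` with respect to the
representation `(A, B)`: `K = {x | xᵀB ≥ 0} = cone(rows A)` and `M = A * B`. -/
def IsSlackMatrixOfConeRep {p q n : ℕ} (M : Matrix (Fin p) (Fin q) ℝ)
    (K : Set (Fin n → ℝ)) (A : Matrix (Fin p) (Fin n) ℝ)
    (B : Matrix (Fin n) (Fin q) ℝ) : Prop :=
  K = {x | 0 ≤ Matrix.vecMul x B} ∧ K = coneOfRows A ∧ M = A * B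

/-- `M` is a slack matrix of some polyhedral cone. -/
def IsSlackMatrixOfCone {p q : ℕ} (M : Matrix (Fin p) (Fin q) ℝ) : Prop :=
  ∃ (n : ℕ) (A : Matrix (Fin p) (Fin n) ℝ) (B : Matrix (Fin n) (Fin q) ℝ),
    {x : Fin n → ℝ | 0 ≤ Matrix.vecMul x B} = coneOfRows A ∧ M = A * B

/-- The row cone generating condition: the cone generated by the rows of `M`
equals the intersection of the row span of `M` with the nonnegative orthant. -/
def RCGC {p q : ℕ} (M : Matrix (Fin p) (Fin q) ℝ) : Prop :=
  {z : Fin q → ℝ | ∃ y : Fin p → ℝ, 0 ≤ y ∧ z = Matrix.vecMul y M} =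
    {z : Fin q → ℝ | (∃ y : Fin p → ℝ, z = Matrix.vecMul y M) ∧ 0 ≤ z}

/-- The column cone generating condition: the cone generated by the columns of `M`
equals the intersection of the column span of `M` with the nonnegative orthant. -/
def CCGC {p q : ℕ} (M : Matrix (Fin p) (Fin q) ℝ) : Prop :=
  {z : Fin p → ℝ | ∃ c : Fin q → ℝ, 0 ≤ c ∧ z = M.mulVec c} =
    {z : Fin p → ℝ | (∃ c : Fin q → ℝ, z = M.mulVec c) ∧ 0 ≤ z}

/-- The convex hull of the rows of `V`. -/
def rowsConv {p n : ℕ} (V : Matrix (Fin p) (Fin n) ℝ) : Set (Fin n → ℝ) :=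
  convexHull ℝ (Set.range fun i => V i)

/-- `S` is a slack matrix of the polytope `P ⊆ ℝⁿ` (of dimension at least one):
there are `V`, `W`, `w` with `P = conv(rows V) = {x | Wx ≤ w}` and
`S i j = w j - ⟨row j of W, row i of V⟩`. -/
def IsSlackMatrixOfPolytopeOn {p q n : ℕ} (S : Matrix (Fin p) (Fin q) ℝ)
    (P : Set (Fin n → ℝ)) : Prop :=
  ∃ (V : Matrix (Fin p) (Fin n) ℝ) (W : Matrix (Fin q) (Fin n) ℝ) (w : Fin q → ℝ),
    P = rowsConv V ∧ P = {x | W.mulVec x ≤ w} ∧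
    (∃ u ∈ P, ∃ v ∈ P, u ≠ v) ∧
    (∀ i j, S i j = w j - ∑ k, W j k * V i k)

/-- `S` is a slack matrix of some polytope (of dimension at least one). -/
def IsSlackMatrixOfPolytope {p q : ℕ} (S : Matrix (Fin p) (Fin q) ℝ) : Prop :=
  ∃ (n : ℕ) (P : Set (Fin n → ℝ)), IsSlackMatrixOfPolytopeOn S P

/-- A cone is pointed if its lineality space is trivial, i.e. it contains no
nonzero `x` together with `-x`. -/
def IsPointedCone {n : ℕ} (K : Set (Fin n → ℝ)) : Prop :=
  ∀ x ∈ K, -x ∈ K → x = 0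

/-- The dimension of a cone: the dimension of its linear hull. -/
noncomputable def coneDim {n : ℕ} (K : Set (Fin n → ℝ)) : ℕ :=
  Module.finrank ℝ (Submodule.span ℝ K)

/-- The (affine) dimension of a set: the dimension of its affine hull. -/
noncomputable def affDim {n : ℕ} (P : Set (Fin n → ℝ)) : ℕ :=
  Module.finrank ℝ (affineSpan ℝ P).direction

/-- The 0/1 incidence pattern of a matrix: `(inc M) i j = 1` iff `M i j = 0`. -/
noncomputable def inc {p q : ℕ} (M : Matrix (Fin p) (Fin q) ℝ) : Matrix (Fin p) (Fin q) ℝ :=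
  Matrix.of fun i j => if M i j = 0 then 1 else 0

/-- `M'` is obtained from `M` by adding zero rows (keeping the order of the
original rows). -/
def AddZeroRows {p p' q : ℕ} (M : Matrix (Fin p) (Fin q) ℝ)
    (M' : Matrix (Fin p') (Fin q) ℝ) : Prop :=
  ∃ φ : Fin p → Fin p', StrictMono φ ∧ (∀ i, M' (φ i) = M i) ∧
    ∀ i', i' ∉ Set.range φ → M' i' = 0

/-- The polar of a set `P`. -/
def polarSet {n : ℕ} (P : Set (Fin n → ℝ)) : Set (Fin n → ℝ) :=
  {y | ∀ x ∈ P, ∑ i, x i * y i ≤ 1}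

lemma vecMul_eq_sum_smul {p q : ℕ} (M : Matrix (Fin p) (Fin q) ℝ) (y : Fin p → ℝ) :
    Matrix.vecMul y M = ∑ i, y i • M i := by
  funext j
  simp [Matrix.vecMul, dotProduct, Finset.sum_apply, mul_comm]

/-- **Theorem (slack matrices of cones, RCGC).**
A nonnegative matrix `M ∈ ℝ₊^{p×q}` is a slack matrix of a polyhedral cone if and
only if `M` satisfies the row cone generating condition
`ℝ₊ᵖ·M = (ℝᵖ·M) ∩ ℝ₊^q`. -/
theorem slack_matrix_of_cone_iff_RCGC {p q : ℕ} (M : Matrix (Fin p) (Fin q) ℝ)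
    (hM : ∀ i j, 0 ≤ M i j) :
    IsSlackMatrixOfCone M ↔ RCGC M := by
  constructor
  · rintro ⟨n, A, B, hKB, hMAB⟩
    ext z
    simp only [Set.mem_setOf_eq]
    constructor
    · rintro ⟨y, hy, rfl⟩
      refine ⟨⟨y, rfl⟩, ?_⟩
      have hx : Matrix.vecMul y A ∈ coneOfRows A := ⟨y, hy, rfl⟩
      rw [← hKB] at hx
      rw [hMAB, ← Matrix.vecMul_vecMul]
      exact hx
    · rintro ⟨⟨y, rfl⟩, hz⟩
      have hx : Matrix.vecMul y A ∈ {x | 0 ≤ Matrix.vecMul x B} := by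
        show 0 ≤ Matrix.vecMul (Matrix.vecMul y A) B
        rw [Matrix.vecMul_vecMul, ← hMAB]
        exact hz
      rw [hKB] at hx
      obtain ⟨y', hy', hxy⟩ := hx
      refine ⟨y', hy', ?_⟩
      rw [hMAB, ← Matrix.vecMul_vecMul y A B, ← Matrix.vecMul_vecMul y' A B, hxy]
  · intro hR
    set L : Submodule ℝ (Fin q → ℝ) := Submodule.span ℝ (Set.range fun i => M i) with hL
    set d := Module.finrank ℝ L with hd
    let b : Module.Basis (Fin d) ℝ L := Module.finBasis ℝ L
    set E : Matrix (Fin d) (Fin q) ℝ := fun k => (b k : Fin q → ℝ) with hE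
    have hMrow : ∀ i, M i ∈ L := fun i => Submodule.subset_span ⟨i, rfl⟩
    set A : Matrix (Fin p) (Fin d) ℝ := fun i k => b.repr ⟨M i, hMrow i⟩ k with hA
    have hvec : ∀ x : Fin d → ℝ,
        Matrix.vecMul x E = ((∑ k, x k • b k : L) : Fin q → ℝ) := by
      intro x
      rw [vecMul_eq_sum_smul]
      simp [hE]
    have hinj : Function.Injective fun x : Fin d → ℝ => Matrix.vecMul x E := by
      intro x x' h
      simp only [hvec] at h
      have h2 : (∑ k, x k • b k : L) = ∑ k, x' k • b k := Subtype.coe_injective h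
      rw [← b.equivFun_symm_apply, ← b.equivFun_symm_apply] at h2
      exact b.equivFun.symm.injective h2
    have hArow : ∀ i, Matrix.vecMul (A i) E = M i := by
      intro i
      rw [hvec]
      have := b.sum_repr ⟨M i, hMrow i⟩
      rw [show (∑ k, A i k • b k : L) = ∑ k, b.repr ⟨M i, hMrow i⟩ k • b k from rfl, this]
    have hMAE : M = A * E := by
      ext i j
      have := congrFun (hArow i) j
      rw [← this]
      simp [Matrix.mul_apply, Matrix.vecMul, dotProduct]
    have hmemL : ∀ z : Fin q → ℝ, z ∈ L ↔ ∃ y : Fin p → ℝ, z = Matrix.vecMul y M := by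
      intro z
      rw [hL, Submodule.mem_span_range_iff_exists_fun ℝ]
      constructor
      · rintro ⟨c, hc⟩; exact ⟨c, by rw [vecMul_eq_sum_smul, hc]⟩
      · rintro ⟨c, hc⟩; exact ⟨c, by rw [← vecMul_eq_sum_smul, hc]⟩
    refine ⟨d, A, E, ?_, hMAE⟩
    ext x
    simp only [Set.mem_setOf_eq, coneOfRows]
    constructor
    · intro hx
      have hzL : Matrix.vecMul x E ∈ L := by
        rw [hvec]; exact (∑ k, x k • b k : L).2
      have hzR : Matrix.vecMul x E ∈
          {z : Fin q → ℝ | (∃ y : Fin p → ℝ, z = Matrix.vecMul y M) ∧ 0 ≤ z} :=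
        ⟨(hmemL _).mp hzL, hx⟩
      rw [← hR] at hzR
      obtain ⟨y, hy, hyz⟩ := hzR
      refine ⟨y, hy, hinj ?_⟩
      show Matrix.vecMul x E = Matrix.vecMul (Matrix.vecMul y A) E
      rw [Matrix.vecMul_vecMul, ← hMAE, ← hyz]
    · rintro ⟨y, hy, rfl⟩
      rw [Matrix.vecMul_vecMul, ← hMAE]
      intro j
      rw [vecMul_eq_sum_smul]
      simp only [Finset.sum_apply, Pi.smul_apply, smul_eq_mul, Pi.zero_apply]
      exact Finset.sum_nonneg fun i _ => mul_nonneg (hy i) (hM i j)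
end

section
/- A nonnegative real matrix M is a slack matrix of a polyhedral cone if and only if its transpose Mᵀ is also a slack matrix of a polyhedral cone. -/
open Matrix Set

open Matrix Set BigOperators

noncomputable section SlackAux

variable {n p q : ℕ}

/-- Carathéodory step: remove one index from the support keeping the sum. -/
lemma cara_step (v : Fin p → EuclideanSpace ℝ (Fin n)) (s : Finset (Fin p))
    (c d : Fin p → ℝ) (hc : 0 ≤ c) (hcs : ∀ i ∉ s, c i = 0)
    (hds : ∀ i ∉ s, d i = 0) (hd0 : ∑ i, d i • v i = 0)
    (hex : ∃ i, 0 < d i) :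
    ∃ i₀ ∈ s, ∃ c' : Fin p → ℝ, 0 ≤ c' ∧ (∀ i ∉ s.erase i₀, c' i = 0) ∧
      ∑ i, c' i • v i = ∑ i, c i • v i := by
  classical
  set T : Finset (Fin p) := Finset.univ.filter (fun i => 0 < d i) with hT
  have hTne : T.Nonempty := by
    obtain ⟨i, hi⟩ := hex
    exact ⟨i, by simp [hT, hi]⟩
  obtain ⟨i₀, hi₀T, hmin⟩ := T.exists_min_image (fun i => c i / d i) hTne
  have hd₀ : 0 < d i₀ := by simpa [hT] using hi₀T
  have hi₀s : i₀ ∈ s := by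
    by_contra h
    exact absurd (hds i₀ h) (ne_of_gt hd₀)
  set r : ℝ := c i₀ / d i₀ with hr
  have hr0 : 0 ≤ r := div_nonneg (hc i₀) hd₀.le
  refine ⟨i₀, hi₀s, fun i => c i - r * d i, ?_, ?_, ?_⟩
  · intro i
    simp only [Pi.zero_apply, sub_nonneg]
    rcases lt_or_ge 0 (d i) with hdi | hdi
    · have hiT : i ∈ T := by simp [hT, hdi]
      have := hmin i hiT
      calc r * d i ≤ (c i / d i) * d i := by
            exact mul_le_mul_of_nonneg_right this hdi.le
        _ = c i := div_mul_cancel₀ _ (ne_of_gt hdi)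
    · calc r * d i ≤ 0 := mul_nonpos_of_nonneg_of_nonpos hr0 hdi
        _ ≤ c i := hc i
  · intro i hi
    rcases Finset.mem_erase.not.mp hi with h
    push_neg at h
    by_cases his : i ∈ s
    · have : i = i₀ := by
        by_contra hne
        exact hi (Finset.mem_erase.mpr ⟨hne, his⟩)
      subst this
      simp [hr, div_mul_cancel₀ _ (ne_of_gt hd₀)]
    · simp [hcs i his, hds i his]
  · have : ∑ i, (c i - r * d i) • v i
        = ∑ i, c i • v i - r • ∑ i, d i • v i := by
      rw [Finset.smul_sum]
      rw [← Finset.sum_sub_distrib]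
      congr 1
      ext i
      rw [sub_smul, smul_smul]
    rw [this, hd0, smul_zero, sub_zero]

/-- Carathéodory for cones: any conic combination is a conic combination over a
linearly independent subfamily. -/
lemma cara (v : Fin p → EuclideanSpace ℝ (Fin n)) (s : Finset (Fin p)) :
    ∀ c : Fin p → ℝ, 0 ≤ c → (∀ i ∉ s, c i = 0) →
    ∃ (t : Finset (Fin p)) (c' : Fin p → ℝ),
      LinearIndependent ℝ (fun i : t => v i) ∧ 0 ≤ c' ∧ (∀ i ∉ t, c' i = 0) ∧
      ∑ i, c' i • v i = ∑ i, c i • v i := by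
  classical
  induction s using Finset.strongInductionOn with
  | _ s IH =>
  intro c hc hcs
  by_cases hli : LinearIndependent ℝ (fun i : s => v i)
  · exact ⟨s, c, hli, hc, hcs, rfl⟩
  · rw [Fintype.not_linearIndependent_iff] at hli
    obtain ⟨g, hg0, j, hj⟩ := hli
    set d : Fin p → ℝ := fun i => if h : i ∈ s then g ⟨i, h⟩ else 0 with hdd
    have hds : ∀ i ∉ s, d i = 0 := fun i hi => by simp [hdd, hi]
    have hsum : ∑ i, d i • v i = 0 := by
      rw [← Finset.sum_subset s.subset_univ
        (fun i _ hi => by rw [hds i hi, zero_smul])]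
      rw [← Finset.sum_attach s (fun i => d i • v i)]
      calc ∑ i : s, d ↑i • v ↑i = ∑ i : s, g i • v ↑i := by
            apply Finset.sum_congr rfl
            intro i _
            simp [hdd, i.2]
        _ = 0 := hg0
    have hdj : d ↑j = g j := by simp [hdd, j.2]
    rcases hj.lt_or_gt with hneg | hpos
    · obtain ⟨i₀, hi₀s, c', hc', hc's, hc'sum⟩ :=
        cara_step v s c (-d) hc hcs (fun i hi => by simp [hds i hi])
          (by simpa using hsum) ⟨j, by simp [hdj]; linarith⟩
      obtain ⟨t, c'', h1, h2, h3, h4⟩ :=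
        IH (s.erase i₀) (Finset.erase_ssubset hi₀s) c' hc' hc's
      exact ⟨t, c'', h1, h2, h3, h4.trans hc'sum⟩
    · obtain ⟨i₀, hi₀s, c', hc', hc's, hc'sum⟩ :=
        cara_step v s c d hc hcs hds hsum ⟨j, by rwa [hdj]⟩
      obtain ⟨t, c'', h1, h2, h3, h4⟩ :=
        IH (s.erase i₀) (Finset.erase_ssubset hi₀s) c' hc' hc's
      exact ⟨t, c'', h1, h2, h3, h4.trans hc'sum⟩





/-- The cone over a linearly independent subfamily is closed. -/
lemma closed_li (v : Fin p → EuclideanSpace ℝ (Fin n)) (t : Finset (Fin p))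
    (li : LinearIndependent ℝ (fun i : t => v i)) :
    IsClosed {x : EuclideanSpace ℝ (Fin n) |
      ∃ c : Fin p → ℝ, 0 ≤ c ∧ (∀ i ∉ t, c i = 0) ∧ x = ∑ i, c i • v i} := by
  classical
  set W : Submodule ℝ (EuclideanSpace ℝ (Fin n)) :=
    Submodule.span ℝ (Set.range fun i : t => v ↑i) with hW
  let b : Module.Basis t ℝ W := Module.Basis.span li
  choose g hg using fun i : t => LinearMap.exists_extend (b.coord i)
  have hgx : ∀ (i : t) (w : W), g i ↑w = b.coord i w := by
    intro i w
    have := congrArg (fun f => f w) (hg i)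
    simpa using this
  have hset : {x : EuclideanSpace ℝ (Fin n) |
      ∃ c : Fin p → ℝ, 0 ≤ c ∧ (∀ i ∉ t, c i = 0) ∧ x = ∑ i, c i • v i}
      = ↑W ∩ ⋂ i : t, (g i) ⁻¹' Set.Ici 0 := by
    ext x
    constructor
    · rintro ⟨c, hc, hcs, rfl⟩
      set w : W := ∑ i : t, c ↑i • b i with hw
      have hwx : (↑w : EuclideanSpace ℝ (Fin n)) = ∑ i, c i • v i := by
        rw [hw]
        push_cast
        rw [← Finset.sum_subset t.subset_univ
          (fun i _ hi => by rw [hcs i hi, zero_smul])]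
        rw [← Finset.sum_attach t (fun i => c i • v i)]
        apply Finset.sum_congr rfl
        intro i _
        rw [Module.Basis.span_apply]
      constructor
      · rw [← hwx]; exact w.2
      · refine Set.mem_iInter.mpr fun i => ?_
        have : g i (∑ j, c j • v j) = c ↑i := by
          rw [← hwx, hgx i w, Module.Basis.coord_apply, hw]
          exact congrFun (b.repr_sum_self (fun j => c ↑j)) i
        simp only [Set.mem_preimage, Set.mem_Ici, this]
        exact hc i
    · rintro ⟨hxW, hx⟩
      set w : W := ⟨x, hxW⟩ with hw
      refine ⟨fun j => if h : j ∈ t then b.repr w ⟨j, h⟩ else 0, ?_, ?_, ?_⟩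
      · intro j
        by_cases h : j ∈ t
        · have := Set.mem_iInter.mp hx ⟨j, h⟩
          simp only [Set.mem_preimage, Set.mem_Ici] at this
          rw [hgx ⟨j, h⟩ w] at this
          simpa [h, Module.Basis.coord_apply] using this
        · simp [h]
      · intro j hj; simp [hj]
      · rw [← Finset.sum_subset t.subset_univ
          (fun i _ hi => by simp [hi])]
        rw [← Finset.sum_attach t
          (fun j => (if h : j ∈ t then b.repr w ⟨j, h⟩ else 0) • v j)]
        have : ∀ i : t, (if h : (i : Fin p) ∈ t then b.repr w ⟨i, h⟩ else 0) • v ↑i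
            = b.repr w i • v ↑i := by
          intro i; simp [i.2]
        rw [Finset.sum_congr rfl (fun i _ => this i)]
        have := b.sum_repr w
        calc x = (↑w : EuclideanSpace ℝ (Fin n)) := rfl
          _ = ↑(∑ i : t, b.repr w i • b i) := by rw [this]
          _ = ∑ i : t, b.repr w i • v ↑i := by
              push_cast
              exact Finset.sum_congr rfl fun i _ => by rw [Module.Basis.span_apply]
  rw [hset]
  exact W.closed_of_finiteDimensional.inter
    (isClosed_iInter fun i =>
      isClosed_Ici.preimage (g i).continuous_of_finiteDimensional)

/-- Finitely generated cones are closed. -/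
lemma closed_cone (v : Fin p → EuclideanSpace ℝ (Fin n)) :
    IsClosed {x : EuclideanSpace ℝ (Fin n) |
      ∃ c : Fin p → ℝ, 0 ≤ c ∧ x = ∑ i, c i • v i} := by
  classical
  have hset : {x : EuclideanSpace ℝ (Fin n) | ∃ c : Fin p → ℝ, 0 ≤ c ∧ x = ∑ i, c i • v i}
      = ⋃ t : Finset (Fin p), {x | LinearIndependent ℝ (fun i : t => v i) ∧
          ∃ c : Fin p → ℝ, 0 ≤ c ∧ (∀ i ∉ t, c i = 0) ∧ x = ∑ i, c i • v i} := by
    ext x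
    simp only [Set.mem_setOf_eq, Set.mem_iUnion]
    constructor
    · rintro ⟨c, hc, rfl⟩
      obtain ⟨t, c', h1, h2, h3, h4⟩ := cara v Finset.univ c hc (by simp)
      exact ⟨t, h1, c', h2, h3, h4.symm⟩
    · rintro ⟨t, _, c, hc, _, rfl⟩
      exact ⟨c, hc, rfl⟩
  rw [hset]
  refine isClosed_iUnion_of_finite fun t => ?_
  by_cases hli : LinearIndependent ℝ (fun i : t => v i)
  · have : {x : EuclideanSpace ℝ (Fin n) | LinearIndependent ℝ (fun i : t => v i) ∧
        ∃ c : Fin p → ℝ, 0 ≤ c ∧ (∀ i ∉ t, c i = 0) ∧ x = ∑ i, c i • v i}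
        = {x | ∃ c : Fin p → ℝ, 0 ≤ c ∧ (∀ i ∉ t, c i = 0) ∧ x = ∑ i, c i • v i} := by
      ext x; simp [hli]
    rw [this]
    exact closed_li v t hli
  · have : {x : EuclideanSpace ℝ (Fin n) | LinearIndependent ℝ (fun i : t => v i) ∧
        ∃ c : Fin p → ℝ, 0 ≤ c ∧ (∀ i ∉ t, c i = 0) ∧ x = ∑ i, c i • v i} = ∅ := by
      ext x; simp [hli]
    rw [this]
    exact isClosed_empty

/-- Farkas lemma. -/
lemma farkas {n q : ℕ} (B : Matrix (Fin n) (Fin q) ℝ) (y : Fin n → ℝ)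
    (h : ∀ x : Fin n → ℝ, 0 ≤ Matrix.vecMul x B → 0 ≤ ∑ i, x i * y i) :
    ∃ c : Fin q → ℝ, 0 ≤ c ∧ y = B.mulVec c := by
  classical
  by_contra hcon
  push_neg at hcon
  -- the cone generated by the columns of `B`
  set K : ConvexCone ℝ (EuclideanSpace ℝ (Fin n)) :=
    { carrier := {z | ∃ c : Fin q → ℝ, 0 ≤ c ∧ z = WithLp.toLp 2 (B.mulVec c)}
      smul_mem' := by
        rintro r hr z ⟨c, hc, rfl⟩
        refine ⟨r • c, fun j => mul_nonneg hr.le (hc j), ?_⟩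
        rw [Matrix.mulVec_smul]; rfl
      add_mem' := by
        rintro z ⟨c, hc, rfl⟩ z' ⟨c', hc', rfl⟩
        refine ⟨c + c', fun j => add_nonneg (hc j) (hc' j), ?_⟩
        rw [Matrix.mulVec_add]; rfl } with hK
  have hmulVec : ∀ c : Fin q → ℝ, B.mulVec c = ∑ j, c j • (fun i => B i j) := by
    intro c
    ext i
    simp [Matrix.mulVec, dotProduct, mul_comm]
  have hKclosed : IsClosed (K : Set (EuclideanSpace ℝ (Fin n))) := by
    have : (K : Set (EuclideanSpace ℝ (Fin n)))
        = {x : EuclideanSpace ℝ (Fin n) |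
            ∃ c : Fin q → ℝ, 0 ≤ c ∧ x = ∑ j, c j • (WithLp.toLp 2 (fun i => B i j) : EuclideanSpace ℝ (Fin n))} := by
      ext x
      constructor
      · rintro ⟨c, hc, rfl⟩
        exact ⟨c, hc, by rw [hmulVec, WithLp.toLp_sum]; rfl⟩
      · rintro ⟨c, hc, rfl⟩
        exact ⟨c, hc, by rw [hmulVec, WithLp.toLp_sum]; rfl⟩
    rw [this]
    exact closed_cone _
  have hKne : (K : Set (EuclideanSpace ℝ (Fin n))).Nonempty :=
    ⟨0, ⟨0, le_refl 0, by rw [Matrix.mulVec_zero]; rfl⟩⟩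
  have hynK : (WithLp.toLp 2 y : EuclideanSpace ℝ (Fin n)) ∉ K := by
    rintro ⟨c, hc, hyc⟩
    exact hcon c hc (congrArg WithLp.ofLp hyc)
  obtain ⟨x, hx1, hx2⟩ : ∃ x : EuclideanSpace ℝ (Fin n), (∀ z ∈ K, 0 ≤ inner ℝ z x) ∧
      inner ℝ x (WithLp.toLp 2 y : EuclideanSpace ℝ (Fin n)) < 0 := by
    have hK0 : K.Pointed := ⟨0, le_refl 0, by rw [Matrix.mulVec_zero]; rfl⟩
    let C : ProperCone ℝ (EuclideanSpace ℝ (Fin n)) := ⟨K.toPointedCone hK0, hKclosed⟩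
    obtain ⟨x, hx1, hx2⟩ := ProperCone.hyperplane_separation' C (x₀ := WithLp.toLp 2 y) hynK
    exact ⟨x, hx1, by rwa [real_inner_comm]⟩
  have hxB : (0 : Fin q → ℝ) ≤ Matrix.vecMul x.ofLp B := by
    intro j
    have hcol : (WithLp.toLp 2 (fun i => B i j) : EuclideanSpace ℝ (Fin n)) ∈ K := by
      refine ⟨Pi.single j 1, ?_, ?_⟩
      · intro k
        by_cases h : k = j <;> simp [h, Pi.single_apply]
      · ext i
        simp [Matrix.mulVec, dotProduct, Pi.single_apply]
    have := hx1 _ hcol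
    rw [real_inner_comm] at this
    simpa [PiLp.inner_apply, RCLike.inner_apply, Matrix.vecMul, dotProduct,
      mul_comm] using this
  have hfin := h x.ofLp hxB
  have : (inner ℝ x (WithLp.toLp 2 y : EuclideanSpace ℝ (Fin n)) : ℝ) = ∑ i, x i * y i := by
    simp [PiLp.inner_apply, RCLike.inner_apply, mul_comm]
  rw [this] at hx2
  linarith

theorem slack_forward {p q : ℕ} (M : Matrix (Fin p) (Fin q) ℝ)
    (hM : ∀ i j, 0 ≤ M i j) (h : IsSlackMatrixOfCone M) :
    IsSlackMatrixOfCone Mᵀ := by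
  obtain ⟨n, A, B, hKB, hAB⟩ := h
  refine ⟨n, Bᵀ, Aᵀ, ?_, by rw [hAB, Matrix.transpose_mul]⟩
  ext x
  simp only [Set.mem_setOf_eq, coneOfRows]
  constructor
  · intro hx
    have hx' : 0 ≤ A.mulVec x := by rwa [← Matrix.vecMul_transpose]
    have hkey : ∀ z : Fin n → ℝ, 0 ≤ Matrix.vecMul z B → 0 ≤ ∑ i, z i * x i := by
      intro z hz
      have hzA : z ∈ coneOfRows A := by rw [← hKB]; exact hz
      obtain ⟨y, hy, rfl⟩ := hzA
      have heq : ∑ i, (Matrix.vecMul y A) i * x i = dotProduct y (A.mulVec x) :=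
        (dotProduct_mulVec y A x).symm
      rw [heq]
      exact Finset.sum_nonneg fun j _ => mul_nonneg (hy j) (hx' j)
    obtain ⟨c, hc, hxc⟩ := farkas B x hkey
    exact ⟨c, hc, by rw [hxc, Matrix.vecMul_transpose]⟩
  · rintro ⟨c, hc, rfl⟩
    have h1 : Matrix.vecMul (Matrix.vecMul c Bᵀ) Aᵀ = M.mulVec c := by
      rw [Matrix.vecMul_transpose, Matrix.vecMul_transpose, Matrix.mulVec_mulVec, ← hAB]
    rw [h1]
    intro i
    show (0:ℝ) ≤ ∑ j, M i j * c j
    exact Finset.sum_nonneg fun j _ => mul_nonneg (hM i j) (hc j)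


/-- **Proposition (transposes of slack matrices of cones).**
A nonnegative real matrix is a slack matrix of a polyhedral cone if and only if
its transpose is also a slack matrix of a polyhedral cone. -/
theorem slack_matrix_of_cone_iff_transpose {p q : ℕ} (M : Matrix (Fin p) (Fin q) ℝ)
    (hM : ∀ i j, 0 ≤ M i j) :
    IsSlackMatrixOfCone M ↔ IsSlackMatrixOfCone Mᵀ := by
  constructor
  · exact slack_forward M hM
  · intro h
    have := slack_forward Mᵀ (fun i j => hM j i) h
    rwa [Matrix.transpose_transpose] at this
end SlackAux
end

section
/- A nonnegative matrix M ∈ ℝ₊^{p×q} is a slack matrix of a polyhedral cone if and only if M satisfies the column cone generating condition (CCGC), i.e., the cone generated by the columns of M coincides with the intersection of the column span of M with the nonnegative orthant: M·ℝ₊^q = (M·ℝ^q) ∩ ℝ₊^p. -/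
open Matrix Set

lemma cone_caratheodory {q n : ℕ} (v : Fin q → (Fin n → ℝ)) (x : Fin n → ℝ) :
    ∀ (s : Finset (Fin q)) (c : Fin q → ℝ), 0 ≤ c → x = ∑ j ∈ s, c j • v j →
    ∃ (t : Finset (Fin q)) (c' : Fin q → ℝ),
      LinearIndependent ℝ (fun i : t => v i) ∧ 0 ≤ c' ∧ x = ∑ j ∈ t, c' j • v j := by
  intro s
  induction s using Finset.strongInductionOn with
  | _ s ih =>
    intro c hc hx
    by_cases hli : LinearIndependent ℝ (fun i : s => v i)
    · exact ⟨s, c, hli, hc, hx⟩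
    have main : ∀ d : Fin q → ℝ, (∑ j ∈ s, d j • v j = 0) → (∀ j, j ∉ s → d j = 0) →
        (∃ j ∈ s, 0 < d j) →
        ∃ (t : Finset (Fin q)) (c' : Fin q → ℝ),
          LinearIndependent ℝ (fun i : t => v i) ∧ 0 ≤ c' ∧ x = ∑ j ∈ t, c' j • v j := by
      rintro d hd hd0 ⟨j₁, hj₁s, hj₁⟩
      set P : Finset (Fin q) := s.filter (fun j => 0 < d j) with hP
      have hPne : P.Nonempty := ⟨j₁, Finset.mem_filter.mpr ⟨hj₁s, hj₁⟩⟩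
      obtain ⟨j₀, hj₀P, hmin⟩ := Finset.exists_min_image P (fun j => c j / d j) hPne
      obtain ⟨hj₀s, hdj₀⟩ := Finset.mem_filter.mp hj₀P
      set t : ℝ := c j₀ / d j₀ with ht
      have ht0 : 0 ≤ t := div_nonneg (hc j₀) hdj₀.le
      set c' : Fin q → ℝ := fun j => c j - t * d j with hc'def
      have hc' : 0 ≤ c' := by
        intro j
        simp only [hc'def, Pi.zero_apply, sub_nonneg]
        by_cases hdj : 0 < d j
        · have hjs : j ∈ s := by
            by_contra hjs
            rw [hd0 j hjs] at hdj; exact lt_irrefl 0 hdj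
          have hjP : j ∈ P := Finset.mem_filter.mpr ⟨hjs, hdj⟩
          exact (le_div_iff₀ hdj).mp (hmin j hjP)
        · push_neg at hdj
          have h1 : t * d j ≤ 0 := mul_nonpos_iff.mpr (Or.inl ⟨ht0, hdj⟩)
          have hcj : (0:ℝ) ≤ c j := hc j
          linarith
      have hc'j₀ : c' j₀ = 0 := by
        simp only [hc'def, ht]
        field_simp
        ring
      have hxs : x = ∑ j ∈ s, c' j • v j := by
        simp only [hc'def, sub_smul, Finset.sum_sub_distrib, mul_smul, ← Finset.smul_sum]
        rw [hd, smul_zero, sub_zero, hx]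
      have hxe : x = ∑ j ∈ s.erase j₀, c' j • v j := by
        rw [hxs, ← Finset.add_sum_erase s _ hj₀s, hc'j₀, zero_smul, zero_add]
      exact ih (s.erase j₀) (Finset.erase_ssubset hj₀s) c' hc' hxe
    obtain ⟨g, hg0, i₀, hgi⟩ := Fintype.not_linearIndependent_iff.mp hli
    set d : Fin q → ℝ := fun j => if h : j ∈ s then g ⟨j, h⟩ else 0 with hd
    have hd0 : ∀ j, j ∉ s → d j = 0 := fun j hj => by simp [hd, hj]
    have hdsum : ∑ j ∈ s, d j • v j = 0 := by
      rw [← Finset.sum_attach s (fun j => d j • v j), ← hg0, Finset.univ_eq_attach]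
      exact Finset.sum_congr rfl fun j _ => by simp [hd, j.2]
    rcases lt_or_gt_of_ne hgi with hneg | hpos
    · refine main (-d) (by simp [hdsum]) (fun j hj => by simp [hd0 j hj]) ⟨i₀, i₀.2, ?_⟩
      simp only [Pi.neg_apply, hd, dif_pos i₀.2, neg_pos]
      exact hneg
    · exact main d hdsum hd0 ⟨i₀, i₀.2, by simp only [hd, dif_pos i₀.2]; exact hpos⟩


lemma isClosed_coneCols {q n : ℕ} (v : Fin q → (Fin n → ℝ)) :
    IsClosed {x : Fin n → ℝ | ∃ c : Fin q → ℝ, 0 ≤ c ∧ x = ∑ j, c j • v j} := by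
  have hunion : {x : Fin n → ℝ | ∃ c : Fin q → ℝ, 0 ≤ c ∧ x = ∑ j, c j • v j} =
      ⋃ t ∈ {t : Finset (Fin q) | LinearIndependent ℝ (fun i : t => v i)},
        {x : Fin n → ℝ | ∃ c : Fin q → ℝ, 0 ≤ c ∧ x = ∑ j ∈ t, c j • v j} := by
    ext x
    simp only [Set.mem_setOf_eq, Set.mem_iUnion]
    constructor
    · rintro ⟨c, hc, hx⟩
      obtain ⟨t, c', hli, hc', hx'⟩ := cone_caratheodory v x Finset.univ c hc hx
      exact ⟨t, hli, c', hc', hx'⟩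
    · rintro ⟨t, hli, c, hc, hx⟩
      refine ⟨fun j => if j ∈ t then c j else 0, fun j => ?_, ?_⟩
      · dsimp only [Pi.zero_apply]
        split
        · exact hc j
        · exact le_refl 0
      · rw [hx, ← Finset.sum_subset (Finset.subset_univ t)
          (fun j _ hj => by simp [hj])]
        exact Finset.sum_congr rfl fun j hj => by simp [hj]
  rw [hunion]
  apply Set.Finite.isClosed_biUnion (Set.toFinite _)
  intro t hli
  let φ : (↥t → ℝ) →ₗ[ℝ] (Fin n → ℝ) :=
    { toFun := fun y => ∑ i : ↥t, y i • v i
      map_add' := fun a b => by simp [add_smul, Finset.sum_add_distrib]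
      map_smul' := fun m a => by simp [mul_smul, Finset.smul_sum]
      }
  have hker : LinearMap.ker φ = ⊥ := by
    rw [LinearMap.ker_eq_bot']
    intro y hy
    funext i
    exact Fintype.linearIndependent_iff.mp hli y hy i
  have himg : {x : Fin n → ℝ | ∃ c : Fin q → ℝ, 0 ≤ c ∧ x = ∑ j ∈ t, c j • v j} =
      φ '' {y : ↥t → ℝ | 0 ≤ y} := by
    ext x
    simp only [Set.mem_setOf_eq, Set.mem_image]
    constructor
    · rintro ⟨c, hc, hx⟩
      refine ⟨fun i => c i, fun i => hc i, ?_⟩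
      show ∑ i : ↥t, c i • v i = x
      rw [hx, Finset.sum_coe_sort t (fun j => c j • v j)]
    · rintro ⟨y, hy, hx⟩
      refine ⟨fun j => if h : j ∈ t then y ⟨j, h⟩ else 0, fun j => ?_, ?_⟩
      · dsimp only [Pi.zero_apply]
        split
        · exact hy _
        · exact le_refl 0
      · rw [← hx]
        show _ = ∑ j ∈ t, _ • v j
        rw [← Finset.sum_coe_sort t (fun j => (if h : j ∈ t then y ⟨j, h⟩ else 0) • v j)]
        exact (Finset.sum_congr rfl fun i _ => by simp [i.2]).symm
  rw [himg]
  have hclosed : IsClosed {y : ↥t → ℝ | 0 ≤ y} := by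
    have : {y : ↥t → ℝ | 0 ≤ y} = ⋂ i, {y : ↥t → ℝ | 0 ≤ y i} := by
      ext y; simp [Pi.le_def]
    rw [this]
    exact isClosed_iInter fun i => isClosed_le continuous_const (continuous_apply i)
  exact (LinearMap.isClosedEmbedding_of_injective hker).isClosedMap _ hclosed


lemma farkas_lemma {n q : ℕ} (B : Matrix (Fin n) (Fin q) ℝ) (v : Fin n → ℝ)
    (h : ∀ x : Fin n → ℝ, 0 ≤ Matrix.vecMul x B → 0 ≤ x ⬝ᵥ v) :
    ∃ c : Fin q → ℝ, 0 ≤ c ∧ v = B.mulVec c := by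
  set K := {x : Fin n → ℝ | ∃ c : Fin q → ℝ, 0 ≤ c ∧ x = B.mulVec c} with hK
  have hmulVec : ∀ c : Fin q → ℝ, B.mulVec c = ∑ j, c j • (fun i => B i j) := by
    intro c
    funext i
    simp [Matrix.mulVec, dotProduct, mul_comm]
  have hKeq : K = {x : Fin n → ℝ | ∃ c : Fin q → ℝ, 0 ≤ c ∧
      x = ∑ j, c j • (fun i => B i j)} := by
    ext x
    constructor <;> rintro ⟨c, hc, rfl⟩ <;> exact ⟨c, hc, by rw [hmulVec]⟩
  have hKclosed : IsClosed K := by rw [hKeq]; exact isClosed_coneCols _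
  have hKconvex : Convex ℝ K := by
    rintro x ⟨c₁, hc₁, rfl⟩ y ⟨c₂, hc₂, rfl⟩ a b ha hb _
    refine ⟨a • c₁ + b • c₂, fun j => ?_, ?_⟩
    · have h1 : (0:ℝ) ≤ c₁ j := hc₁ j
      have h2 : (0:ℝ) ≤ c₂ j := hc₂ j
      dsimp only [Pi.add_apply, Pi.smul_apply, Pi.zero_apply, smul_eq_mul]
      nlinarith
    · rw [Matrix.mulVec_add, Matrix.mulVec_smul, Matrix.mulVec_smul]
  by_contra hv
  have hvK : v ∉ K := fun ⟨c, hc, hvc⟩ => hv ⟨c, hc, hvc⟩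
  obtain ⟨f, u, hfv, hfK⟩ := geometric_hahn_banach_point_closed hKconvex hKclosed hvK
  set x : Fin n → ℝ := fun i => f (Pi.single i 1) with hxdef
  have hfx : ∀ w : Fin n → ℝ, f w = x ⬝ᵥ w := by
    intro w
    have hw : w = ∑ i, w i • (Pi.single i 1 : Fin n → ℝ) := by
      rw [← Finset.univ_sum_single w]
      exact Finset.sum_congr rfl fun i _ => by
        funext k
        simp [Pi.single_apply]
    conv_lhs => rw [hw]
    rw [map_sum]
    simp only [_root_.map_smul, smul_eq_mul]
    simp [dotProduct, hxdef, mul_comm]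
  have h0K : (0 : Fin n → ℝ) ∈ K := ⟨0, le_refl 0, by simp⟩
  have hu0 : u < 0 := by simpa using hfK 0 h0K
  have hxB : 0 ≤ Matrix.vecMul x B := by
    intro j
    by_contra hneg
    push_neg at hneg
    have hneg' : Matrix.vecMul x B j < 0 := hneg
    set s : ℝ := (u - 1) / (Matrix.vecMul x B j) with hs
    have hspos : 0 < s := div_pos_of_neg_of_neg (by linarith) hneg'
    have hsingle : (0 : Fin q → ℝ) ≤ Pi.single j s := by
      rw [Pi.le_def]
      intro k
      rw [Pi.zero_apply, Pi.single_apply]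
      split
      · exact hspos.le
      · exact le_refl 0
    have hmem : B.mulVec (Pi.single j s) ∈ K := ⟨Pi.single j s, hsingle, rfl⟩
    have hval : f (B.mulVec (Pi.single j s)) = u - 1 := by
      rw [hfx, Matrix.dotProduct_mulVec]
      have : Matrix.vecMul x B ⬝ᵥ Pi.single j s = Matrix.vecMul x B j * s := by
        simp [dotProduct, Pi.single_apply]
      rw [this, hs, mul_comm, div_mul_cancel₀ _ (ne_of_lt hneg')]
    have := hfK _ hmem
    rw [hval] at this
    linarith
  have h1 := h x hxB
  rw [hfx v] at hfv
  linarith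


lemma dot_nonneg {m : ℕ} {a b : Fin m → ℝ} (ha : 0 ≤ a) (hb : 0 ≤ b) : 0 ≤ a ⬝ᵥ b :=
  Finset.sum_nonneg fun i _ => mul_nonneg (ha i) (hb i)


/-- **Corollary (slack matrices of cones, CCGC).**
A nonnegative matrix `M ∈ ℝ₊^{p×q}` is a slack matrix of a polyhedral cone if and
only if `M` satisfies the column cone generating condition
`M·ℝ₊^q = (M·ℝ^q) ∩ ℝ₊ᵖ`. -/
theorem slack_matrix_of_cone_iff_CCGC {p q : ℕ} (M : Matrix (Fin p) (Fin q) ℝ)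
    (hM : ∀ i j, 0 ≤ M i j) :
    IsSlackMatrixOfCone M ↔ CCGC M := by
  constructor
  · rintro ⟨n, A, B, hcone, rfl⟩
    ext z
    simp only [Set.mem_setOf_eq]
    constructor
    · rintro ⟨c, hc, rfl⟩
      refine ⟨⟨c, rfl⟩, fun i => ?_⟩
      rw [Pi.zero_apply]
      exact dot_nonneg (fun j => hM i j) hc
    · rintro ⟨⟨c, rfl⟩, hz⟩
      -- v := B.mulVec c satisfies: for all x with x B ≥ 0 (i.e. x ∈ cone rows A), x ⬝ᵥ v ≥ 0
      have hfar : ∀ x : Fin n → ℝ, 0 ≤ Matrix.vecMul x B → 0 ≤ x ⬝ᵥ B.mulVec c := by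
        intro x hx
        have hxK : x ∈ coneOfRows A := hcone ▸ hx
        obtain ⟨y, hy, rfl⟩ := hxK
        have heq : Matrix.vecMul y A ⬝ᵥ B.mulVec c = y ⬝ᵥ (A * B).mulVec c :=
          calc Matrix.vecMul y A ⬝ᵥ B.mulVec c
              = (Matrix.vecMul (Matrix.vecMul y A) B) ⬝ᵥ c := Matrix.dotProduct_mulVec _ _ _
            _ = Matrix.vecMul y (A * B) ⬝ᵥ c := by rw [Matrix.vecMul_vecMul]
            _ = y ⬝ᵥ (A * B).mulVec c := (Matrix.dotProduct_mulVec _ _ _).symm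
        rw [heq]
        exact dot_nonneg hy (fun i => hz i)
      obtain ⟨c', hc', hvc'⟩ := farkas_lemma B (B.mulVec c) hfar
      exact ⟨c', hc', by rw [← Matrix.mulVec_mulVec, hvc', Matrix.mulVec_mulVec]⟩
  · intro hccgc
    -- rank factorization
    set L : Submodule ℝ (Fin p → ℝ) := LinearMap.range M.mulVecLin with hL
    set r : ℕ := Module.finrank ℝ L with hr
    set b : Module.Basis (Fin r) ℝ L := Module.finBasis ℝ L with hb
    have hcol : ∀ j, (fun i => M i j) ∈ L := by
      intro j
      refine ⟨Pi.single j 1, ?_⟩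
      funext i
      simp [Matrix.mulVecLin_apply, Matrix.mulVec_single]
    set A : Matrix (Fin p) (Fin r) ℝ := Matrix.of fun i k => (b k : Fin p → ℝ) i with hA
    set B : Matrix (Fin r) (Fin q) ℝ :=
      Matrix.of fun k j => b.repr ⟨fun i => M i j, hcol j⟩ k with hB
    have hAw : ∀ w : Fin r → ℝ, A.mulVec w = ((∑ k, w k • b k : L) : Fin p → ℝ) := by
      intro w
      funext i
      simp only [Matrix.mulVec, dotProduct, hA, Matrix.of_apply]
      rw [Submodule.coe_sum]
      rw [Finset.sum_apply]
      exact Finset.sum_congr rfl fun k _ => by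
        rw [Submodule.coe_smul, Pi.smul_apply, smul_eq_mul, mul_comm]
    have hAinj : ∀ w w' : Fin r → ℝ, A.mulVec w = A.mulVec w' → w = w' := by
      intro w w' hww
      rw [hAw, hAw] at hww
      have h2 : b.equivFun.symm w = b.equivFun.symm w' := by
        rw [Module.Basis.equivFun_symm_apply, Module.Basis.equivFun_symm_apply]
        exact Subtype.ext hww
      exact b.equivFun.symm.injective h2
    have hAB : A * B = M := by
      ext i j
      have hsum : (∑ k, (b.repr ⟨fun i => M i j, hcol j⟩) k • b k : L)
          = ⟨fun i => M i j, hcol j⟩ := b.sum_repr _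
      rw [Matrix.mul_apply]
      calc ∑ k, A i k * B k j
          = ((∑ k, (b.repr ⟨fun i => M i j, hcol j⟩) k • b k : L) : Fin p → ℝ) i := by
            rw [Submodule.coe_sum, Finset.sum_apply]
            exact Finset.sum_congr rfl fun k _ => by
              rw [Submodule.coe_smul, Pi.smul_apply, smul_eq_mul, hA, hB]
              simp [mul_comm]
        _ = M i j := by rw [hsum]
    have hKeq : {x : Fin r → ℝ | 0 ≤ Matrix.vecMul x B} = coneOfRows A := by
      ext x
      simp only [Set.mem_setOf_eq]
      constructor
      · intro hx
        have hside : ∀ w : Fin r → ℝ, 0 ≤ Matrix.vecMul w Aᵀ → 0 ≤ w ⬝ᵥ x := by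
          intro w hw
          rw [Matrix.vecMul_transpose] at hw
          have hzc : A.mulVec w ∈ {z : Fin p → ℝ | ∃ c : Fin q → ℝ, 0 ≤ c ∧ z = M.mulVec c} := by
            rw [hccgc]
            refine ⟨?_, hw⟩
            have hmem : A.mulVec w ∈ L := by
              rw [hAw]
              exact (∑ k, w k • b k : L).2
            obtain ⟨c, hc⟩ := hmem
            exact ⟨c, by rw [← hc]; simp [Matrix.mulVecLin_apply]⟩
          obtain ⟨c, hc, hAwc⟩ := hzc
          have hwB : w = B.mulVec c := by
            apply hAinj
            rw [Matrix.mulVec_mulVec, hAB, ← hAwc]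
          rw [hwB, dotProduct_comm, Matrix.dotProduct_mulVec]
          exact dot_nonneg hx hc
        obtain ⟨y, hy, hxy⟩ := farkas_lemma Aᵀ x hside
        exact ⟨y, hy, by rw [hxy, Matrix.mulVec_transpose]⟩
      · rintro ⟨y, hy, rfl⟩
        have hvm : Matrix.vecMul (Matrix.vecMul y A) B = Matrix.vecMul y M := by
          rw [Matrix.vecMul_vecMul, hAB]
        rw [hvm]
        intro j
        rw [Pi.zero_apply]
        exact dot_nonneg hy (fun i => hM i j)
    exact ⟨r, A, B, hKeq, hAB.symm⟩
end

section
/- For a nonnegative matrix M ∈ ℝ₊^{p×q}, the following three statements are pairwise equivalent: (i) M is a slack matrix of a polyhedral cone; (ii) M satisfies the RCGC, i.e., ℝ₊^p·M = (ℝ^p·M) ∩ ℝ₊^q; (iii) M satisfies the CCGC, i.e., M·ℝ₊^q = (M·ℝ^q) ∩ ℝ₊^p. -/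
open Matrix Set

section SlackAux


lemma carath_aux {E : Type*} [AddCommGroup E] [Module ℝ E]
    {ι : Type*} [Fintype ι] [DecidableEq ι] (v : ι → E) :
    ∀ (s : Finset ι) (y : ι → ℝ), (∀ i, 0 ≤ y i) → (∀ i ∉ s, y i = 0) →
    ∃ (t : Finset ι) (c : ι → ℝ), t ⊆ s ∧ LinearIndependent ℝ (fun i : t => v i) ∧
      (∀ i, 0 ≤ c i) ∧ (∀ i ∉ t, c i = 0) ∧ ∑ i, c i • v i = ∑ i, y i • v i := by
  intro s
  induction s using Finset.strongInduction with
  | _ s ih =>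
    intro y hy hys
    by_cases hLI : LinearIndependent ℝ (fun i : s => v i)
    · exact ⟨s, y, subset_rfl, hLI, hy, hys, rfl⟩
    · obtain ⟨g, hg0, i₁, hgi₁⟩ := Fintype.not_linearIndependent_iff.mp hLI
      set G₀ : ι → ℝ := fun i => if h : i ∈ s then g ⟨i, h⟩ else 0 with hG₀
      have hG₀s : ∀ i ∉ s, G₀ i = 0 := fun i hi => by simp [hG₀, hi]
      have hG₀sum : ∑ i, G₀ i • v i = 0 := by
        rw [← Finset.sum_subset s.subset_univ (fun i _ hi => by simp [hG₀s i hi])]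
        rw [← Finset.sum_attach s (fun i => G₀ i • v i)]
        rw [← hg0]
        exact Finset.sum_congr rfl fun i _ => by simp [hG₀, i.2]
      have hG₀i₁ : G₀ (i₁ : ι) ≠ 0 := by simpa [hG₀, i₁.2] using hgi₁
      obtain ⟨G, hGs, hGsum, j₀, hj₀s, hj₀pos⟩ :
          ∃ G : ι → ℝ, (∀ i ∉ s, G i = 0) ∧ ∑ i, G i • v i = 0 ∧
            ∃ j ∈ s, 0 < G j := by
        rcases lt_or_gt_of_ne hG₀i₁ with hneg | hpos
        · refine ⟨-G₀, fun i hi => by simp [hG₀s i hi], by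
            simp [Finset.sum_neg_distrib, neg_smul] at *
            simpa using hG₀sum, i₁, i₁.2, by simpa using hneg⟩
        · exact ⟨G₀, hG₀s, hG₀sum, i₁, i₁.2, hpos⟩
      set T : Finset ι := s.filter (fun i => 0 < G i) with hT
      have hTne : T.Nonempty := ⟨j₀, by simp [hT, hj₀s, hj₀pos]⟩
      obtain ⟨i₀, hi₀T, hi₀min⟩ := T.exists_min_image (fun i => y i / G i) hTne
      have hi₀s : i₀ ∈ s := (Finset.mem_filter.mp hi₀T).1
      have hGi₀ : 0 < G i₀ := (Finset.mem_filter.mp hi₀T).2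
      set lam : ℝ := y i₀ / G i₀ with hlam
      have hlam0 : 0 ≤ lam := div_nonneg (hy i₀) hGi₀.le
      set y' : ι → ℝ := fun i => y i - lam * G i with hy'
      have hy'0 : ∀ i, 0 ≤ y' i := by
        intro i
        by_cases hGi : 0 < G i
        · have his : i ∈ s := by
            by_contra h; rw [hGs i h] at hGi; exact lt_irrefl 0 hGi
          have : lam ≤ y i / G i := hi₀min i (Finset.mem_filter.mpr ⟨his, hGi⟩)
          have := (le_div_iff₀ hGi).mp this
          simpa [hy'] using this
        · push_neg at hGi
          have h1 : lam * G i ≤ 0 := mul_nonpos_of_nonneg_of_nonpos hlam0 hGi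
          have h2 := hy i
          simp only [hy', sub_nonneg]
          linarith
      have hy'i₀ : y' i₀ = 0 := by
        simp [hy', hlam, div_mul_cancel₀ _ (ne_of_gt hGi₀)]
      have hy's : ∀ i ∉ s.erase i₀, y' i = 0 := by
        intro i hi
        by_cases h : i = i₀
        · rw [h]; exact hy'i₀
        · have his : i ∉ s := fun hin => hi (Finset.mem_erase.mpr ⟨h, hin⟩)
          simp [hy', hys i his, hGs i his]
      have hy'sum : ∑ i, y' i • v i = ∑ i, y i • v i := by
        simp only [hy', sub_smul, Finset.sum_sub_distrib, mul_smul, ← Finset.smul_sum,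
          hGsum, smul_zero, sub_zero]
      obtain ⟨t, c, hts, hLI', hc0, hct, hsum⟩ :=
        ih (s.erase i₀) (Finset.erase_ssubset hi₀s) y' hy'0 hy's
      exact ⟨t, c, hts.trans (Finset.erase_subset _ _), hLI', hc0, hct, hsum.trans hy'sum⟩

lemma isClosed_fg_cone {E : Type*} [NormedAddCommGroup E] [NormedSpace ℝ E]
    [FiniteDimensional ℝ E] {ι : Type*} [Fintype ι] (v : ι → E) :
    IsClosed {z : E | ∃ y : ι → ℝ, 0 ≤ y ∧ z = ∑ i, y i • v i} := by
  classical
  have hset : {z : E | ∃ y : ι → ℝ, 0 ≤ y ∧ z = ∑ i, y i • v i} =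
      ⋃ (s : Finset ι), ⋃ (_ : LinearIndependent ℝ (fun i : s => v i)),
        (fun y : (s → ℝ) => ∑ i, y i • v (i : ι)) '' {y | ∀ i, 0 ≤ y i} := by
    ext z
    simp only [mem_iUnion, mem_image, mem_setOf_eq]
    constructor
    · rintro ⟨y, hy, rfl⟩
      obtain ⟨t, c, -, hLI, hc0, hct, hsum⟩ :=
        carath_aux v Finset.univ y (fun i => hy i) (by simp)
      refine ⟨t, hLI, fun i : t => c i, fun i => hc0 i, ?_⟩
      rw [← hsum, ← Finset.sum_subset t.subset_univ (fun i _ hi => by simp [hct i hi]),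
        ← Finset.sum_attach t (fun i => c i • v i)]
      rfl
    · rintro ⟨s, hLI, y, hy, rfl⟩
      refine ⟨fun i => if h : i ∈ s then y ⟨i, h⟩ else 0, fun i => ?_, ?_⟩
      · by_cases h : i ∈ s <;> simp [h, hy _]
      · rw [← Finset.sum_subset s.subset_univ (fun i _ hi => by simp [hi]),
          ← Finset.sum_attach s (fun i => (if h : i ∈ s then y ⟨i, h⟩ else 0) • v i)]
        exact Finset.sum_congr rfl fun i _ => by simp [i.2]
  rw [hset]
  refine isClosed_iUnion_of_finite fun s => isClosed_iUnion_of_finite fun hLI => ?_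
  let L : (s → ℝ) →ₗ[ℝ] E :=
    { toFun := fun y => ∑ i, y i • v (i : ι)
      map_add' := by intro a b; simp [add_smul, Finset.sum_add_distrib]
      map_smul' := by intro r a; simp [mul_smul, Finset.smul_sum] }
  have hker : LinearMap.ker L = ⊥ := by
    rw [LinearMap.ker_eq_bot']
    intro g hg
    funext i
    exact Fintype.linearIndependent_iff.mp hLI g hg i
  have hemb := LinearMap.isClosedEmbedding_of_injective hker
  have hclosed : IsClosed {y : (s → ℝ) | ∀ i, 0 ≤ y i} := by
    have : {y : (s → ℝ) | ∀ i, 0 ≤ y i} = ⋂ i, {y | 0 ≤ y i} := by ext; simp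
    rw [this]
    exact isClosed_iInter fun i => isClosed_le continuous_const (continuous_apply i)
  exact hemb.isClosedMap _ hclosed

lemma farkas_sep {m : ℕ} {ι : Type*} [Fintype ι] [DecidableEq ι]
    (v : ι → (Fin m → ℝ)) (z : Fin m → ℝ)
    (h : ¬ ∃ y : ι → ℝ, 0 ≤ y ∧ z = ∑ i, y i • v i) :
    ∃ u : Fin m → ℝ, (∀ i, 0 ≤ ∑ k, v i k * u k) ∧ ∑ k, z k * u k < 0 := by
  classical
  let e : (Fin m → ℝ) ≃ₗ[ℝ] EuclideanSpace ℝ (Fin m) :=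
    (WithLp.linearEquiv 2 ℝ (Fin m → ℝ)).symm
  have he : ∀ (x : Fin m → ℝ) (k : Fin m), e x k = x k := fun _ _ => rfl
  set V : ι → EuclideanSpace ℝ (Fin m) := fun i => e (v i) with hV
  set Z : EuclideanSpace ℝ (Fin m) := e z with hZ
  set Kset : Set (EuclideanSpace ℝ (Fin m)) :=
    {w | ∃ y : ι → ℝ, 0 ≤ y ∧ w = ∑ i, y i • V i} with hKset
  have hsum : ∀ y : ι → ℝ, (∑ i, y i • V i) = e (∑ i, y i • v i) := by
    intro y; simp [hV, map_sum]
  have hZK : Z ∉ Kset := by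
    rintro ⟨y, hy, hZeq⟩
    exact h ⟨y, hy, e.injective (by rw [← hsum]; exact hZeq)⟩
  let K : ProperCone ℝ (EuclideanSpace ℝ (Fin m)) :=
    { carrier := Kset
      zero_mem' := ⟨0, le_refl 0, by simp⟩
      isClosed' := isClosed_fg_cone V
      smul_mem' := by
        rintro c x ⟨y, hy, rfl⟩
        refine ⟨(c : ℝ) • y, smul_nonneg c.2 hy, ?_⟩
        change (c : ℝ) • ∑ i, y i • V i = _
        rw [Finset.smul_sum]
        exact Finset.sum_congr rfl fun i _ => by
          simp [Pi.smul_apply, smul_smul]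
      add_mem' := by
        rintro x x' ⟨y₁, hy₁, rfl⟩ ⟨y₂, hy₂, rfl⟩
        exact ⟨y₁ + y₂, add_nonneg hy₁ hy₂, by
          simp [add_smul, Finset.sum_add_distrib]⟩ }
  have hKne : (K : Set (EuclideanSpace ℝ (Fin m))).Nonempty :=
    ⟨0, ⟨0, le_refl 0, by simp⟩⟩
  have hKclosed : IsClosed (K : Set (EuclideanSpace ℝ (Fin m))) := isClosed_fg_cone V
  obtain ⟨u, hu1, hu2⟩ :=
    K.hyperplane_separation' hZK
  refine ⟨fun k => u k, fun i => ?_, ?_⟩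
  · have hViK : V i ∈ K := ⟨Pi.single i 1, by
      intro j; by_cases hij : j = i <;> simp [Pi.single_apply, hij], by
      rw [Finset.sum_eq_single i (fun j _ hj => by simp [Pi.single_apply, hj]) (by simp)]
      simp⟩
    have := hu1 _ hViK
    simpa [PiLp.inner_apply, RCLike.inner_apply, he, hV, mul_comm] using this
  · have : (inner ℝ Z u : ℝ) = ∑ k, z k * u k := by
      simp [PiLp.inner_apply, RCLike.inner_apply, he, hZ, mul_comm]
    rwa [this] at hu2

lemma slack_to_RCGC {p q : ℕ} {M : Matrix (Fin p) (Fin q) ℝ}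
    (h : IsSlackMatrixOfCone M) : RCGC M := by
  obtain ⟨n, A, B, hKone, hMAB⟩ := h
  ext z
  simp only [mem_setOf_eq]
  constructor
  · rintro ⟨y, hy, rfl⟩
    refine ⟨⟨y, rfl⟩, ?_⟩
    have hxA : Matrix.vecMul y A ∈ coneOfRows A := ⟨y, hy, rfl⟩
    rw [← hKone, mem_setOf_eq, Matrix.vecMul_vecMul, ← hMAB] at hxA
    exact hxA
  · rintro ⟨⟨y, rfl⟩, hz⟩
    have hx : Matrix.vecMul y A ∈ {x | 0 ≤ Matrix.vecMul x B} := by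
      rw [mem_setOf_eq, Matrix.vecMul_vecMul, ← hMAB]; exact hz
    rw [hKone] at hx
    obtain ⟨y', hy', hxy'⟩ := hx
    refine ⟨y', hy', ?_⟩
    rw [hMAB, ← Matrix.vecMul_vecMul, ← Matrix.vecMul_vecMul, hxy']

lemma RCGC_to_slack {p q : ℕ} {M : Matrix (Fin p) (Fin q) ℝ} (hM : ∀ i j, 0 ≤ M i j)
    (h : RCGC M) : IsSlackMatrixOfCone M := by
  classical
  set L : Submodule ℝ (Fin q → ℝ) := Submodule.span ℝ (Set.range M) with hL
  set d := Module.finrank ℝ L with hd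
  let b : Module.Basis (Fin d) ℝ L := Module.finBasis ℝ L
  let Bmat : Matrix (Fin d) (Fin q) ℝ := fun k j => (b k : Fin q → ℝ) j
  have hrow : ∀ i : Fin p, M i ∈ L := fun i => Submodule.subset_span (mem_range_self i)
  let Amat : Matrix (Fin p) (Fin d) ℝ := fun i k => b.repr ⟨M i, hrow i⟩ k
  have hvB : ∀ x : Fin d → ℝ,
      Matrix.vecMul x Bmat = ((∑ k, x k • b k : L) : Fin q → ℝ) := by
    intro x; funext j
    simp [Matrix.vecMul, dotProduct, Bmat, Finset.sum_apply]
  have hMA : ∀ i, M i = Matrix.vecMul (Amat i) Bmat := by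
    intro i
    rw [hvB]
    have hb := b.sum_repr ⟨M i, hrow i⟩
    rw [show (∑ k, Amat i k • b k) = ∑ k, b.repr ⟨M i, hrow i⟩ k • b k from rfl, hb]
  have hMAB : M = Amat * Bmat := by
    ext i j
    have := congrFun (hMA i) j
    simpa [Matrix.mul_apply, Matrix.vecMul, dotProduct] using this
  have hinj : ∀ x : Fin d → ℝ, Matrix.vecMul x Bmat = 0 → x = 0 := by
    intro x hx
    rw [hvB] at hx
    have hx0 : (∑ k, x k • b k : L) = 0 := Subtype.ext hx
    funext k
    exact Fintype.linearIndependent_iff.mp b.linearIndependent x hx0 k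
  have hspan : ∀ z : Fin q → ℝ, z ∈ L ↔ ∃ y, z = Matrix.vecMul y M := by
    intro z
    rw [hL, show range M = range M.row from rfl, ← range_vecMulLinear M]
    simp [LinearMap.mem_range, Matrix.vecMulLinear_apply, eq_comm]
  refine ⟨d, Amat, Bmat, ?_, hMAB⟩
  ext x
  simp only [mem_setOf_eq, coneOfRows]
  constructor
  · intro hx
    have hmem : Matrix.vecMul x Bmat ∈ L := by
      rw [hvB]; exact (∑ k, x k • b k : L).2
    have h1 : Matrix.vecMul x Bmat ∈
        {z : Fin q → ℝ | (∃ y, z = Matrix.vecMul y M) ∧ 0 ≤ z} :=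
      ⟨(hspan _).mp hmem, hx⟩
    rw [← h] at h1
    obtain ⟨y, hy, hxy⟩ := h1
    refine ⟨y, hy, ?_⟩
    have h2 : Matrix.vecMul (x - Matrix.vecMul y Amat) Bmat = 0 := by
      rw [Matrix.sub_vecMul, Matrix.vecMul_vecMul, ← hMAB, ← hxy, sub_self]
    have := hinj _ h2
    rw [sub_eq_zero] at this
    exact this
  · rintro ⟨y, hy, rfl⟩
    show 0 ≤ Matrix.vecMul (Matrix.vecMul y Amat) Bmat
    rw [Matrix.vecMul_vecMul, ← hMAB]
    intro j
    have := Finset.sum_nonneg fun i (_ : i ∈ Finset.univ) => mul_nonneg (hy i) (hM i j)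
    simpa [Matrix.vecMul, dotProduct] using this

lemma slack_to_CCGC {p q : ℕ} {M : Matrix (Fin p) (Fin q) ℝ} (hM : ∀ i j, 0 ≤ M i j)
    (h : IsSlackMatrixOfCone M) : CCGC M := by
  obtain ⟨n, A, B, hKone, hMAB⟩ := h
  ext z
  simp only [mem_setOf_eq]
  constructor
  · rintro ⟨c, hc, rfl⟩
    refine ⟨⟨c, rfl⟩, fun i => ?_⟩
    have := Finset.sum_nonneg fun j (_ : j ∈ Finset.univ) => mul_nonneg (hM i j) (hc j)
    simpa [Matrix.mulVec, dotProduct] using this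
  · rintro ⟨⟨c, rfl⟩, hz⟩
    by_contra hcon
    have hmv : ∀ c' : Fin q → ℝ, M *ᵥ c' = ∑ j, c' j • Mᵀ j := by
      intro c'; funext i
      simp [Matrix.mulVec, dotProduct, Finset.sum_apply, Matrix.transpose_apply, mul_comm]
    obtain ⟨u, hu1, hu2⟩ := farkas_sep (fun j => Mᵀ j) (M *ᵥ c) (by
      rintro ⟨c', hc', heq⟩
      exact hcon ⟨c', hc', by rw [heq, hmv c']⟩)
    have huM : 0 ≤ Matrix.vecMul u M := by
      intro j
      have := hu1 j
      simpa [Matrix.vecMul, dotProduct, Matrix.transpose_apply, mul_comm] using this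
    have hx : Matrix.vecMul u A ∈ {x | 0 ≤ Matrix.vecMul x B} := by
      rw [mem_setOf_eq, Matrix.vecMul_vecMul, ← hMAB]; exact huM
    rw [hKone] at hx
    obtain ⟨y', hy', hxy'⟩ := hx
    have key : ∑ k, (M *ᵥ c) k * u k = dotProduct y' (M *ᵥ c) := by
      have e1 : ∑ k, (M *ᵥ c) k * u k = dotProduct u (M *ᵥ c) := by
        simp [dotProduct, mul_comm]
      have huMy : Matrix.vecMul u M = Matrix.vecMul y' M := by
        rw [hMAB, ← Matrix.vecMul_vecMul, ← Matrix.vecMul_vecMul, hxy']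
      rw [e1, dotProduct_mulVec, huMy, ← dotProduct_mulVec]
    have hge : 0 ≤ ∑ k, (M *ᵥ c) k * u k := by
      rw [key]
      exact Finset.sum_nonneg fun i _ => mul_nonneg (hy' i) (hz i)
    linarith

lemma CCGC_to_slack {p q : ℕ} {M : Matrix (Fin p) (Fin q) ℝ} (hM : ∀ i j, 0 ≤ M i j)
    (h : CCGC M) : IsSlackMatrixOfCone M := by
  classical
  set L : Submodule ℝ (Fin p → ℝ) := Submodule.span ℝ (Set.range Mᵀ) with hL
  set d := Module.finrank ℝ L with hd
  let b : Module.Basis (Fin d) ℝ L := Module.finBasis ℝ L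
  have hcol : ∀ j : Fin q, Mᵀ j ∈ L := fun j => Submodule.subset_span (mem_range_self j)
  let Amat : Matrix (Fin p) (Fin d) ℝ := fun i k => (b k : Fin p → ℝ) i
  let Bmat : Matrix (Fin d) (Fin q) ℝ := fun k j => b.repr ⟨Mᵀ j, hcol j⟩ k
  have hAu : ∀ u : Fin d → ℝ,
      Amat *ᵥ u = ((∑ k, u k • b k : L) : Fin p → ℝ) := by
    intro u; funext i
    simp [Matrix.mulVec, dotProduct, Amat, Finset.sum_apply, mul_comm]
  have hMAB : M = Amat * Bmat := by
    ext i j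
    have hb := b.sum_repr ⟨Mᵀ j, hcol j⟩
    have := congrFun (congrArg (Subtype.val) hb) i
    simp only [AddSubmonoidClass.coe_finset_sum, SetLike.val_smul, Finset.sum_apply,
      Pi.smul_apply, smul_eq_mul] at this
    rw [Matrix.transpose_apply] at this
    rw [Matrix.mul_apply, ← this]
    exact Finset.sum_congr rfl fun k _ => mul_comm _ _
  have hinj : ∀ u : Fin d → ℝ, Amat *ᵥ u = 0 → u = 0 := by
    intro u hu
    rw [hAu] at hu
    have hu0 : (∑ k, u k • b k : L) = 0 := Subtype.ext hu
    funext k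
    exact Fintype.linearIndependent_iff.mp b.linearIndependent u hu0 k
  refine ⟨d, Amat, Bmat, ?_, hMAB⟩
  ext x
  simp only [mem_setOf_eq, coneOfRows]
  constructor
  · intro hx
    by_contra hcon
    have hvm : ∀ y : Fin p → ℝ, Matrix.vecMul y Amat = ∑ i, y i • Amat i := by
      intro y; funext k
      simp [Matrix.vecMul, dotProduct, Finset.sum_apply]
    obtain ⟨u, hu1, hu2⟩ := farkas_sep (fun i => Amat i) x (by
      rintro ⟨y, hy, hxy⟩
      exact hcon ⟨y, hy, by rw [hvm]; exact hxy⟩)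
    have hAu0 : 0 ≤ Amat *ᵥ u := by
      intro i
      simpa [Matrix.mulVec, dotProduct] using hu1 i
    have hmemAu : ∃ c0, Amat *ᵥ u = M *ᵥ c0 := by
      have hmem : Amat *ᵥ u ∈ L := by rw [hAu]; exact (∑ k, u k • b k : L).2
      rw [hL, show range Mᵀ = range M.col from rfl, ← Matrix.range_mulVecLin] at hmem
      obtain ⟨c0, hc0⟩ := hmem
      exact ⟨c0, hc0.symm⟩
    obtain ⟨c0, hc0⟩ := hmemAu
    have h1 : Amat *ᵥ u ∈ {z : Fin p → ℝ | (∃ c, z = M *ᵥ c) ∧ 0 ≤ z} := ⟨⟨c0, hc0⟩, hAu0⟩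
    rw [← h] at h1
    obtain ⟨c', hc', hAuc⟩ := h1
    have hu : u = Bmat *ᵥ c' := by
      have h2 : Amat *ᵥ (u - Bmat *ᵥ c') = 0 := by
        rw [Matrix.mulVec_sub, Matrix.mulVec_mulVec, ← hMAB, ← hAuc, sub_self]
      have := hinj _ h2
      rwa [sub_eq_zero] at this
    have hkey : ∑ k, x k * u k = dotProduct (Matrix.vecMul x Bmat) c' := by
      rw [hu, show ∑ k, x k * (Bmat *ᵥ c') k = dotProduct x (Bmat *ᵥ c') from rfl,
        dotProduct_mulVec]
    have hge : 0 ≤ ∑ k, x k * u k := by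
      rw [hkey]
      exact Finset.sum_nonneg fun j _ => mul_nonneg (hx j) (hc' j)
    linarith
  · rintro ⟨y, hy, rfl⟩
    show 0 ≤ Matrix.vecMul (Matrix.vecMul y Amat) Bmat
    rw [Matrix.vecMul_vecMul, ← hMAB]
    intro j
    have := Finset.sum_nonneg fun i (_ : i ∈ Finset.univ) => mul_nonneg (hy i) (hM i j)
    simpa [Matrix.vecMul, dotProduct] using this


end SlackAux

/-- **Corollary.** For a nonnegative matrix `M ∈ ℝ₊^{p×q}` the following are
pairwise equivalent: (i) `M` is a slack matrix of a polyhedral cone;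
(ii) `M` satisfies the RCGC; (iii) `M` satisfies the CCGC. -/
theorem slack_matrix_of_cone_RCGC_CCGC_equiv {p q : ℕ} (M : Matrix (Fin p) (Fin q) ℝ)
    (hM : ∀ i j, 0 ≤ M i j) :
    (IsSlackMatrixOfCone M ↔ RCGC M) ∧ (RCGC M ↔ CCGC M) :=
  ⟨⟨slack_to_RCGC, RCGC_to_slack hM⟩,
    ⟨fun h => slack_to_CCGC hM (RCGC_to_slack hM h),
     fun h => slack_to_RCGC (CCGC_to_slack hM h)⟩⟩
end

section
/- Let M ∈ ℝ₊^{p×q} be the slack matrix of a polyhedral cone and let M = AB be a rank factorization of M (i.e., A ∈ ℝ^{p×k}, B ∈ ℝ^{k×q} with k = rank(M) = rank(A) = rank(B)). Then if K is the cone generated by the rows of A, the columns of B form an ℋ-representation of K, i.e., K = {x ∈ ℝ^k : xᵀB ≥ 0}; in particular, M is a slack matrix of K with respect to the representation (A, B). -/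
open Matrix Set

/-- **Lemma (rank factorizations of slack matrices of cones).**
Let `M ∈ ℝ₊^{p×q}` be a slack matrix of a polyhedral cone and let `M = A * B`
be a rank factorization of `M`. Then, with `K` the cone generated by the rows of
`A`, the columns of `B` form an `ℋ`-representation of `K`; in particular `M` is
a slack matrix of `K` with respect to `(A, B)`. -/
theorem slack_matrix_rank_factorization {p q k : ℕ} (M : Matrix (Fin p) (Fin q) ℝ)
    (hM : ∀ i j, 0 ≤ M i j) (hslack : IsSlackMatrixOfCone M)
    (A : Matrix (Fin p) (Fin k) ℝ) (B : Matrix (Fin k) (Fin q) ℝ)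
    (hfac : M = A * B) (hrank : M.rank = k) (hA : A.rank = k) (hB : B.rank = k) :
    coneOfRows A = {x : Fin k → ℝ | 0 ≤ Matrix.vecMul x B} ∧
      IsSlackMatrixOfConeRep M (coneOfRows A) A B := by

  have key : coneOfRows A = {x : Fin k → ℝ | 0 ≤ Matrix.vecMul x B} := by
    apply Set.Subset.antisymm
    · rintro x ⟨y, hy, rfl⟩
      have h1 : Matrix.vecMul (Matrix.vecMul y A) B = Matrix.vecMul y M := by
        rw [hfac, Matrix.vecMul_vecMul]
      intro j
      rw [h1]
      simp only [Matrix.vecMul, dotProduct, Pi.zero_apply]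
      exact Finset.sum_nonneg fun i _ => mul_nonneg (hy i) (hM i j)
    · intro x hx
      obtain ⟨n, A₀, B₀, hrep, hM0⟩ := hslack
      -- row space of M equals row space of B
      have hle : LinearMap.range (Matrix.mulVecLin Mᵀ) ≤
          LinearMap.range (Matrix.mulVecLin Bᵀ) := by
        rintro z ⟨y, rfl⟩
        refine ⟨Matrix.mulVecLin Aᵀ y, ?_⟩
        simp [hfac, Matrix.transpose_mul, Matrix.mulVecLin_apply, Matrix.mulVec_mulVec]
      have hfr : Module.finrank ℝ (LinearMap.range (Matrix.mulVecLin Mᵀ)) =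
          Module.finrank ℝ (LinearMap.range (Matrix.mulVecLin Bᵀ)) := by
        show Mᵀ.rank = Bᵀ.rank
        rw [Matrix.rank_transpose, Matrix.rank_transpose, hrank, hB]
      have hspan : LinearMap.range (Matrix.mulVecLin Mᵀ) =
          LinearMap.range (Matrix.mulVecLin Bᵀ) :=
        Submodule.eq_of_le_of_finrank_eq hle hfr
      -- find y with vecMul y M = vecMul x B
      have hmem : Matrix.vecMul x B ∈ LinearMap.range (Matrix.mulVecLin Mᵀ) := by
        rw [hspan]
        exact ⟨x, by rw [Matrix.mulVecLin_apply, Matrix.mulVec_transpose]⟩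
      obtain ⟨y, hy⟩ := hmem
      rw [Matrix.mulVecLin_apply, Matrix.mulVec_transpose] at hy
      -- use the cone representation of M to get a nonnegative y'
      have hw : 0 ≤ Matrix.vecMul (Matrix.vecMul y A₀) B₀ := by
        rw [Matrix.vecMul_vecMul, ← hM0, hy]
        exact hx
      have : Matrix.vecMul y A₀ ∈ coneOfRows A₀ := by
        rw [← hrep]; exact hw
      obtain ⟨y', hy', hw'⟩ := this
      have hzy' : Matrix.vecMul y' M = Matrix.vecMul x B := by
        rw [hM0, ← Matrix.vecMul_vecMul, ← hw', Matrix.vecMul_vecMul, ← hM0, hy]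
      -- injectivity of right multiplication by B
      have hinj : Function.Injective (Matrix.mulVecLin Bᵀ) := by
        rw [← LinearMap.ker_eq_bot]
        have hrn := LinearMap.finrank_range_add_finrank_ker (Matrix.mulVecLin Bᵀ)
        have hrg : Module.finrank ℝ (LinearMap.range (Matrix.mulVecLin Bᵀ)) = k := by
          show Bᵀ.rank = k
          rw [Matrix.rank_transpose, hB]
        rw [hrg, Module.finrank_fin_fun] at hrn
        have : Module.finrank ℝ (LinearMap.ker (Matrix.mulVecLin Bᵀ)) = 0 := by omega
        exact Submodule.finrank_eq_zero.mp this
      have hxeq : x = Matrix.vecMul y' A := by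
        apply hinj
        rw [Matrix.mulVecLin_apply, Matrix.mulVecLin_apply, Matrix.mulVec_transpose,
          Matrix.mulVec_transpose, ← hzy', hfac, ← Matrix.vecMul_vecMul]
      exact ⟨y', hy', hxeq⟩
  exact ⟨key, key, rfl, hfac⟩
end

section
/- A nonnegative matrix M ∈ ℝ₊^{p×q} with rank(M) ≥ 2 is a slack matrix of a polytope if and only if M is a slack matrix of a polyhedral cone and the all-ones vector 𝟙 ∈ ℝ^p lies in the column span M·ℝ^q of M. -/
open Matrix Set

section Aux
open Finset


/-- membership in convex hull of rows -/
lemma mem_rowsConv_iff {p n : ℕ} (V : Matrix (Fin p) (Fin n) ℝ) (x : Fin n → ℝ) :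
    x ∈ convexHull ℝ (Set.range fun i => V i) ↔
      ∃ y : Fin p → ℝ, (0 ≤ y) ∧ (∑ i, y i = 1) ∧ x = Matrix.vecMul y V := by
  rw [convexHull_range_eq_exists_affineCombination]
  constructor
  · rintro ⟨s, wt, hw0, hw1, rfl⟩
    refine ⟨fun i => if i ∈ s then wt i else 0, ?_, ?_, ?_⟩
    · intro i; by_cases h : i ∈ s <;> simp [h]
      exact hw0 i h
    · rw [Finset.sum_ite_mem, Finset.univ_inter, hw1]
    · rw [s.affineCombination_eq_linear_combination _ _ hw1]
      funext k
      rw [Matrix.vecMul, dotProduct, Finset.sum_apply]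
      have : (∑ i, (if i ∈ s then wt i else 0) * V i k)
          = ∑ i, (if i ∈ s then wt i * V i k else 0) :=
        Finset.sum_congr rfl (by intro i _; split <;> simp)
      rw [this, Finset.sum_ite_mem, Finset.univ_inter]
      exact Finset.sum_congr rfl fun i _ => by simp [smul_eq_mul]
  · rintro ⟨y, hy0, hy1, rfl⟩
    refine ⟨Finset.univ, y, fun i _ => hy0 i, hy1, ?_⟩
    rw [Finset.univ.affineCombination_eq_linear_combination _ _ hy1]
    funext k
    simp [Matrix.vecMul, dotProduct, Finset.sum_apply]


lemma rank_le_one_of_rows_eq {p q : ℕ} (M : Matrix (Fin p) (Fin q) ℝ)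
    (h : ∀ i i', M i = M i') : M.rank ≤ 1 := by
  classical
  have : LinearMap.range M.mulVecLin ≤ LinearMap.range
      ((LinearMap.pi fun _ : Fin p => LinearMap.id) : ℝ →ₗ[ℝ] (Fin p → ℝ)) := by
    rintro f ⟨c, rfl⟩
    rcases Nat.eq_zero_or_pos p with hp | hp
    · exact ⟨0, funext fun i => absurd i.2 (by omega)⟩
    · refine ⟨M.mulVecLin c ⟨0, hp⟩, funext fun i => ?_⟩
      simp only [LinearMap.pi_apply, LinearMap.id_apply, Matrix.mulVecLin_apply,
        Matrix.mulVec, dotProduct]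
      rw [h ⟨0, hp⟩ i]
  calc M.rank = Module.finrank ℝ (LinearMap.range M.mulVecLin) := rfl
    _ ≤ Module.finrank ℝ (LinearMap.range
        ((LinearMap.pi fun _ : Fin p => LinearMap.id) : ℝ →ₗ[ℝ] (Fin p → ℝ))) :=
        Submodule.finrank_mono this
    _ ≤ Module.finrank ℝ ℝ := LinearMap.finrank_range_le _
    _ = 1 := Module.finrank_self ℝ

lemma exists_rows_ne {p q : ℕ} (M : Matrix (Fin p) (Fin q) ℝ)
    (h : 2 ≤ M.rank) : ∃ i i' : Fin p, M i ≠ M i' := by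
  by_contra hc
  push_neg at hc
  have := rank_le_one_of_rows_eq M hc
  omega

section Fwd
variable {p q n : ℕ} (M : Matrix (Fin p) (Fin q) ℝ) (hM : ∀ i j, 0 ≤ M i j)
  (V : Matrix (Fin p) (Fin n) ℝ) (W : Matrix (Fin q) (Fin n) ℝ) (w : Fin q → ℝ)
  (P : Set (Fin n → ℝ))
  (hPV : P = convexHull ℝ (Set.range fun i => V i))
  (hPW : P = {x | W.mulVec x ≤ w})
  (u v : Fin n → ℝ) (hu : u ∈ P) (hv : v ∈ P) (huv : u ≠ v)
  (hS : ∀ i j, M i j = w j - ∑ k, W j k * V i k)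

-- recession cone is trivial
include hPV hPW hu in
lemma rec_triv (hp : 0 < p) : ∀ z : Fin n → ℝ, W.mulVec z ≤ 0 → z = 0 := by
  intro z hz
  by_contra hzne
  have hzz : 0 < ∑ k, z k * z k := by
    rcases Function.ne_iff.mp hzne with ⟨k0, hk0⟩
    refine Finset.sum_pos' (fun k _ => mul_self_nonneg _) ⟨k0, Finset.mem_univ _, ?_⟩
    exact mul_self_pos.mpr hk0
  -- bound on ⟨x, z⟩ for x ∈ P
  have : Nonempty (Fin p) := ⟨⟨0, hp⟩⟩
  set C : ℝ := Finset.univ.sup' (Finset.univ_nonempty) (fun i => ∑ k, V i k * z k) with hC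
  have hCle : ∀ i : Fin p, (∑ k, V i k * z k) ≤ C := by
    intro i
    rw [hC]
    exact Finset.le_sup' (fun i => ∑ k, V i k * z k) (Finset.mem_univ i)
  have hbound : ∀ x ∈ P, ∑ k, x k * z k ≤ C := by
    intro x hx
    rw [hPV, mem_rowsConv_iff] at hx
    obtain ⟨y, hy0, hy1, rfl⟩ := hx
    have : ∑ k, Matrix.vecMul y V k * z k = ∑ i, y i * (∑ k, V i k * z k) := by
      simp only [Matrix.vecMul, dotProduct, Finset.sum_mul, Finset.mul_sum]
      rw [Finset.sum_comm]
      exact Finset.sum_congr rfl fun i _ => Finset.sum_congr rfl fun k _ => by ring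
    rw [this]
    calc ∑ i, y i * (∑ k, V i k * z k) ≤ ∑ i, y i * C := by
          refine Finset.sum_le_sum fun i _ => ?_
          exact mul_le_mul_of_nonneg_left (hCle i) (hy0 i)
      _ = C := by rw [← Finset.sum_mul, hy1, one_mul]
  -- u + λ z ∈ P for λ ≥ 0
  have hmem : ∀ lam : ℝ, 0 ≤ lam → u + lam • z ∈ P := by
    intro lam hlam
    rw [hPW]
    intro j
    have hWu : W.mulVec u j ≤ w j := by rw [hPW] at hu; exact hu j
    have : W.mulVec (u + lam • z) j = W.mulVec u j + lam * W.mulVec z j := by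
      rw [Matrix.mulVec_add, Matrix.mulVec_smul]; simp
    rw [this]
    have hzj : (W.mulVec z) j ≤ 0 := by simpa using hz j
    nlinarith [mul_nonneg hlam (neg_nonneg.mpr hzj)]
  -- derive contradiction
  have key : ∀ lam : ℝ, 0 ≤ lam → (∑ k, u k * z k) + lam * (∑ k, z k * z k) ≤ C := by
    intro lam hlam
    have := hbound _ (hmem lam hlam)
    calc (∑ k, u k * z k) + lam * (∑ k, z k * z k)
        = ∑ k, (u + lam • z) k * z k := by
          simp only [Pi.add_apply, Pi.smul_apply, smul_eq_mul, add_mul,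
            Finset.sum_add_distrib, Finset.mul_sum]
          ring_nf
      _ ≤ C := this
  have h0 := key 0 le_rfl
  have hlam2 : (0:ℝ) ≤ (C - (∑ k, u k * z k) + 1) / (∑ k, z k * z k) := by
    apply div_nonneg _ hzz.le
    nlinarith
  have := key _ hlam2
  rw [div_mul_cancel₀ _ (ne_of_gt hzz)] at this
  linarith

include hM hPV hPW hu hv huv hS in
lemma forward_dir (hp : 0 < p) :
    ∃ (A : Matrix (Fin p) (Fin (n+1)) ℝ) (B : Matrix (Fin (n+1)) (Fin q) ℝ),
      ({x : Fin (n+1) → ℝ | 0 ≤ Matrix.vecMul x B} = coneOfRows A ∧ M = A * B) ∧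
      (∃ c : Fin q → ℝ, M.mulVec c = 1) := by
  classical
  set A : Matrix (Fin p) (Fin (n+1)) ℝ := Matrix.of fun i => Fin.cons 1 (V i) with hA
  set B : Matrix (Fin (n+1)) (Fin q) ℝ :=
    Matrix.of fun t j => (Fin.cons (w j) (fun k => -W j k) : Fin (n+1) → ℝ) t with hB
  have hMAB : M = A * B := by
    ext i j
    rw [Matrix.mul_apply, Fin.sum_univ_succ]
    simp only [hA, hB, Matrix.of_apply, Fin.cons_zero, Fin.cons_succ, one_mul, mul_neg]
    rw [hS i j]
    have : ∑ k, -(V i k * W j k) = -∑ k, W j k * V i k := by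
      rw [Finset.sum_neg_distrib]
      exact congrArg _ (Finset.sum_congr rfl fun k _ => by ring)
    rw [this]; ring
  -- key identity: vecMul x B j = x 0 * w j - W.mulVec (Fin.tail x) j
  have hkey : ∀ (x : Fin (n+1) → ℝ) j,
      Matrix.vecMul x B j = x 0 * w j - W.mulVec (Fin.tail x) j := by
    intro x j
    rw [Matrix.vecMul, dotProduct, Fin.sum_univ_succ]
    simp only [hB, Matrix.of_apply, Fin.cons_zero, Fin.cons_succ, mul_neg]
    rw [Finset.sum_neg_distrib]
    simp only [Matrix.mulVec, dotProduct, Fin.tail]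
    rw [sub_eq_add_neg]
    exact congrArg _ (congrArg _ (Finset.sum_congr rfl fun k _ => by ring))
  have hrec := rec_triv V W w P hPV hPW u hu hp
  have hcone : {x : Fin (n+1) → ℝ | 0 ≤ Matrix.vecMul x B} = coneOfRows A := by
    ext x
    constructor
    · intro hx
      simp only [Set.mem_setOf_eq] at hx
      rcases lt_trichotomy (x 0) 0 with ht | ht | ht
      · exfalso
        have hs : (0:ℝ) < -(x 0)⁻¹ := by
          have : (x 0)⁻¹ < 0 := inv_lt_zero.mpr ht
          linarith
        have hu0 : u + (-(x 0)⁻¹) • Fin.tail x = 0 := by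
          apply hrec
          intro j
          have h1 : W.mulVec (Fin.tail x) j ≤ x 0 * w j := by
            have := hx j; rw [hkey] at this; simp only [Pi.zero_apply] at this; linarith
          have h2 : W.mulVec u j ≤ w j := by rw [hPW] at hu; exact hu j
          have : W.mulVec (u + (-(x 0)⁻¹) • Fin.tail x) j
              = W.mulVec u j + (-(x 0)⁻¹) * W.mulVec (Fin.tail x) j := by
            rw [Matrix.mulVec_add, Matrix.mulVec_smul]; simp
          rw [this]
          have h3 : (-(x 0)⁻¹) * W.mulVec (Fin.tail x) j ≤ (-(x 0)⁻¹) * (x 0 * w j) :=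
            mul_le_mul_of_nonneg_left h1 hs.le
          have h4 : (-(x 0)⁻¹) * (x 0 * w j) = -w j := by
            rw [neg_mul, ← mul_assoc, inv_mul_cancel₀ (ne_of_lt ht), one_mul]
          simp only [Pi.zero_apply]
          linarith
        have hv0 : v + (-(x 0)⁻¹) • Fin.tail x = 0 := by
          apply hrec
          intro j
          have h1 : W.mulVec (Fin.tail x) j ≤ x 0 * w j := by
            have := hx j; rw [hkey] at this; simp only [Pi.zero_apply] at this; linarith
          have h2 : W.mulVec v j ≤ w j := by rw [hPW] at hv; exact hv j
          have : W.mulVec (v + (-(x 0)⁻¹) • Fin.tail x) j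
              = W.mulVec v j + (-(x 0)⁻¹) * W.mulVec (Fin.tail x) j := by
            rw [Matrix.mulVec_add, Matrix.mulVec_smul]; simp
          rw [this]
          have h3 : (-(x 0)⁻¹) * W.mulVec (Fin.tail x) j ≤ (-(x 0)⁻¹) * (x 0 * w j) :=
            mul_le_mul_of_nonneg_left h1 hs.le
          have h4 : (-(x 0)⁻¹) * (x 0 * w j) = -w j := by
            rw [neg_mul, ← mul_assoc, inv_mul_cancel₀ (ne_of_lt ht), one_mul]
          simp only [Pi.zero_apply]
          linarith
        apply huv
        have := hu0.trans hv0.symm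
        exact add_right_cancel this
      · -- x 0 = 0
        have htail : Fin.tail x = 0 := by
          apply hrec
          intro j
          have := hx j; rw [hkey, ht] at this
          simp only [Pi.zero_apply, zero_mul, zero_sub] at this ⊢
          linarith
        refine ⟨0, le_rfl, ?_⟩
        rw [Matrix.zero_vecMul]
        funext t
        refine Fin.cases ?_ ?_ t
        · exact ht
        · intro k
          have : Fin.tail x k = 0 := by rw [htail]; rfl
          exact this
      · -- x 0 > 0
        have hzP : (x 0)⁻¹ • Fin.tail x ∈ P := by
          rw [hPW]
          intro j
          have h1 : W.mulVec (Fin.tail x) j ≤ x 0 * w j := by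
            have := hx j; rw [hkey] at this; simp only [Pi.zero_apply] at this; linarith
          have : W.mulVec ((x 0)⁻¹ • Fin.tail x) j = (x 0)⁻¹ * W.mulVec (Fin.tail x) j := by
            rw [Matrix.mulVec_smul]; simp
          rw [this]
          have h3 : (x 0)⁻¹ * W.mulVec (Fin.tail x) j ≤ (x 0)⁻¹ * (x 0 * w j) :=
            mul_le_mul_of_nonneg_left h1 (inv_nonneg.mpr ht.le)
          have h4 : (x 0)⁻¹ * (x 0 * w j) = w j := by field_simp
          linarith
        rw [hPV, mem_rowsConv_iff] at hzP
        obtain ⟨lam, hlam0, hlam1, hlameq⟩ := hzP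
        refine ⟨fun i => x 0 * lam i, fun i => mul_nonneg ht.le (hlam0 i), ?_⟩
        funext t
        refine Fin.cases ?_ ?_ t
        · rw [Matrix.vecMul, dotProduct]
          simp only [hA, Matrix.of_apply, Fin.cons_zero, mul_one]
          rw [← Finset.mul_sum, hlam1, mul_one]
        · intro k
          rw [Matrix.vecMul, dotProduct]
          simp only [hA, Matrix.of_apply, Fin.cons_succ]
          have : x k.succ = x 0 * ((x 0)⁻¹ • Fin.tail x) k := by
            simp only [Pi.smul_apply, smul_eq_mul, Fin.tail]
            field_simp
          rw [this, hlameq, Matrix.vecMul, dotProduct, Finset.mul_sum]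
          exact Finset.sum_congr rfl fun i _ => by ring
    · rintro ⟨y, hy, rfl⟩
      simp only [Set.mem_setOf_eq]
      rw [Matrix.vecMul_vecMul, ← hMAB]
      intro j
      simp only [Pi.zero_apply, Matrix.vecMul, dotProduct]
      exact Finset.sum_nonneg fun i _ => mul_nonneg (hy i) (hM i j)
  refine ⟨A, B, ⟨hcone, hMAB⟩, ?_⟩
  -- pointedness ⇒ vecMul · B injective ⇒ B surjective ⇒ ones in column span
  have hinj : Function.Injective (Matrix.mulVecLin Bᵀ) := by
    rw [← LinearMap.ker_eq_bot]
    apply LinearMap.ker_eq_bot'.mpr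
    intro x hx0
    have hx0' : Matrix.vecMul x B = 0 := by
      rw [← Matrix.mulVec_transpose]; exact hx0
    have h1 : x ∈ coneOfRows A := by
      rw [← hcone]; simp only [Set.mem_setOf_eq, hx0', le_refl]
    have h2 : -x ∈ coneOfRows A := by
      rw [← hcone]
      simp only [Set.mem_setOf_eq, Matrix.neg_vecMul, hx0', neg_zero, le_refl]
    obtain ⟨y, hy, hxy⟩ := h1
    obtain ⟨y', hy', hxy'⟩ := h2
    have hsum : Matrix.vecMul (y + y') A = 0 := by
      rw [Matrix.add_vecMul, ← hxy, ← hxy']; simp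
    have h0 : ∑ i, (y + y') i * A i 0 = 0 := by
      have := congrFun hsum 0
      simpa [Matrix.vecMul, dotProduct] using this
    simp only [hA, Matrix.of_apply, Fin.cons_zero, mul_one] at h0
    have hall : ∀ i ∈ Finset.univ, (y + y') i = 0 := by
      rw [← Finset.sum_eq_zero_iff_of_nonneg]
      · exact h0
      · intro i _
        exact add_nonneg (hy i) (hy' i)
    have hy0 : y = 0 := by
      funext i
      have h := hall i (Finset.mem_univ i)
      simp only [Pi.add_apply] at h
      have hyi : (0:ℝ) ≤ y i := hy i
      have hyi' : (0:ℝ) ≤ y' i := hy' i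
      show y i = 0
      linarith
    rw [hy0] at hxy
    rw [hxy, Matrix.zero_vecMul]
  have hrankB : B.rank = n + 1 := by
    rw [← Matrix.rank_transpose]
    unfold Matrix.rank
    rw [LinearMap.finrank_range_of_inj hinj]
    simp [Module.finrank_fintype_fun_eq_card]
  have hsurj : LinearMap.range B.mulVecLin = ⊤ := by
    apply Submodule.eq_top_of_finrank_eq
    rw [show Module.finrank ℝ (LinearMap.range B.mulVecLin) = B.rank from rfl, hrankB]
    simp [Module.finrank_fintype_fun_eq_card]
  have : (Pi.single (0 : Fin (n+1)) (1:ℝ)) ∈ LinearMap.range B.mulVecLin := by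
    rw [hsurj]; trivial
  obtain ⟨c, hc⟩ := this
  refine ⟨c, ?_⟩
  rw [hMAB, ← Matrix.mulVec_mulVec]
  rw [show B.mulVec c = Pi.single (0 : Fin (n+1)) (1:ℝ) from hc]
  funext i
  rw [Matrix.mulVec_single]
  simp [hA]
end Fwd

lemma backward_dir {p q n : ℕ} (M : Matrix (Fin p) (Fin q) ℝ) (hrank : 2 ≤ M.rank)
    (A : Matrix (Fin p) (Fin n) ℝ) (B : Matrix (Fin n) (Fin q) ℝ)
    (hKA : {x : Fin n → ℝ | 0 ≤ Matrix.vecMul x B} = coneOfRows A)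
    (hMAB : M = A * B) (c : Fin q → ℝ) (hc : M.mulVec c = 1) :
    ∃ (m : ℕ) (Vm : Matrix (Fin p) (Fin m) ℝ) (Wm : Matrix (Fin q) (Fin m) ℝ)
      (wv : Fin q → ℝ),
      (convexHull ℝ (Set.range fun i => Vm i)) = {y | Wm.mulVec y ≤ wv} ∧
      (∃ u ∈ convexHull ℝ (Set.range fun i => Vm i),
        ∃ v ∈ convexHull ℝ (Set.range fun i => Vm i), u ≠ v) ∧
      (∀ i j, M i j = wv j - ∑ k, Wm j k * Vm i k) := by
  classical
  set d : Fin n → ℝ := B.mulVec c with hd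
  have hAd : ∀ i, ∑ t, A i t * d t = 1 := by
    intro i
    have h1 : A.mulVec d = 1 := by
      rw [hd, Matrix.mulVec_mulVec, ← hMAB, hc]
    have := congrFun h1 i
    simpa [Matrix.mulVec, dotProduct] using this
  obtain ⟨i1, i2, hMrows⟩ := exists_rows_ne M hrank
  have hMrow : ∀ i, M i = Matrix.vecMul (A i) B := by
    intro i; funext j
    rw [hMAB, Matrix.mul_apply]; rfl
  have hArows : A i1 ≠ A i2 := by
    intro h
    exact hMrows (by rw [hMrow, hMrow, h])
  -- the direction submodule
  set D : Submodule ℝ (Fin n → ℝ) := vectorSpan ℝ (Set.range fun i => A i) with hD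
  have hDd : ∀ x ∈ D, ∑ t, x t * d t = 0 := by
    have hl : ∀ (x y : Fin n → ℝ), ∑ t, (x - y) t * d t
        = (∑ t, x t * d t) - ∑ t, y t * d t := by
      intro x y
      rw [← Finset.sum_sub_distrib]
      exact Finset.sum_congr rfl fun t _ => by simp [sub_mul]
    let ℓ : (Fin n → ℝ) →ₗ[ℝ] ℝ :=
      { toFun := fun x => ∑ t, x t * d t
        map_add' := by
          intro x y
          simp only [Pi.add_apply, add_mul]
          exact Finset.sum_add_distrib
        map_smul' := by
          intro r x
          simp only [Pi.smul_apply, smul_eq_mul, RingHom.id_apply, Finset.mul_sum]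
          exact Finset.sum_congr rfl fun t _ => by ring }
    have hle : D ≤ LinearMap.ker ℓ := by
      rw [hD, vectorSpan_def, Submodule.span_le]
      rintro x ⟨x1, hx1, x2, hx2, rfl⟩
      obtain ⟨j1, rfl⟩ := Set.mem_range.mp hx1
      obtain ⟨j2, rfl⟩ := Set.mem_range.mp hx2
      simp only [SetLike.mem_coe, LinearMap.mem_ker]
      show ∑ t, (A j1 - A j2) t * d t = 0
      rw [hl, hAd, hAd, sub_self]
    intro x hx
    exact hle hx
  set m : ℕ := Module.finrank ℝ D with hm
  set e : Module.Basis (Fin m) ℝ D := Module.finBasis ℝ D with he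
  have hmem : ∀ i, A i - A i1 ∈ D := by
    intro i
    have := vsub_mem_vectorSpan ℝ (Set.mem_range_self (f := fun i => A i) i)
      (Set.mem_range_self (f := fun i => A i) i1)
    simpa [vsub_eq_sub] using this
  set Vm : Matrix (Fin p) (Fin m) ℝ :=
    Matrix.of fun i k => e.repr ⟨A i - A i1, hmem i⟩ k with hVm
  set φ : (Fin m → ℝ) → (Fin n → ℝ) :=
    fun y => A i1 + ∑ k, y k • ((e k : Fin n → ℝ)) with hφ
  have hsummem : ∀ y : Fin m → ℝ, (∑ k, y k • ((e k : Fin n → ℝ))) ∈ D := by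
    intro y
    exact Submodule.sum_mem D fun k _ => Submodule.smul_mem D _ (e k).2
  have hφV : ∀ i, φ (Vm i) = A i := by
    intro i
    have : ∑ k, (Vm i k) • ((e k : Fin n → ℝ))
        = ((∑ k, (e.repr ⟨A i - A i1, hmem i⟩ k) • e k : D) : Fin n → ℝ) := by
      push_cast
      exact Finset.sum_congr rfl fun k _ => by rw [hVm]; norm_cast
    show A i1 + ∑ k, (Vm i k) • ((e k : Fin n → ℝ)) = A i
    rw [this, e.sum_repr ⟨A i - A i1, hmem i⟩]
    simp
  have hφd : ∀ y, ∑ t, φ y t * d t = 1 := by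
    intro y
    rw [hφ]
    simp only [Pi.add_apply, add_mul]
    rw [Finset.sum_add_distrib, hAd i1, hDd _ (hsummem y), add_zero]
  have hφinj : Function.Injective φ := by
    intro y y' hyy0
    have hyy : ∑ k, y k • ((e k : Fin n → ℝ)) = ∑ k, y' k • ((e k : Fin n → ℝ)) := by
      have h2 : A i1 + ∑ k, y k • ((e k : Fin n → ℝ))
          = A i1 + ∑ k, y' k • ((e k : Fin n → ℝ)) := hyy0
      exact add_left_cancel h2
    have hcoe : ((∑ k, y k • e k : D) : Fin n → ℝ) = ((∑ k, y' k • e k : D) : Fin n → ℝ) := by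
      push_cast
      exact hyy
    have hsum : (∑ k, y k • e k : D) = ∑ k, y' k • e k := Subtype.coe_injective hcoe
    have hzero : ∑ k, (y k - y' k) • e k = 0 := by
      have h3 : ∑ k, (y k - y' k) • e k = (∑ k, y k • e k) - ∑ k, y' k • e k := by
        rw [← Finset.sum_sub_distrib]
        exact Finset.sum_congr rfl fun k _ => by module
      rw [h3, hsum, sub_self]
    have := Fintype.linearIndependent_iff.mp e.linearIndependent _ hzero
    funext k
    have hk := this k
    linarith [hk]
  have hsum_eq : ∀ y : Fin p → ℝ, ∑ t, (Matrix.vecMul y A) t * d t = ∑ i, y i := by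
    intro y
    simp only [Matrix.vecMul, dotProduct, Finset.sum_mul]
    rw [Finset.sum_comm]
    refine Finset.sum_congr rfl fun i _ => ?_
    calc ∑ t, y i * A i t * d t = y i * ∑ t, A i t * d t := by
          rw [Finset.mul_sum]
          exact Finset.sum_congr rfl fun t _ => by ring
      _ = y i := by rw [hAd i, mul_one]
  -- φ of a convex combination
  have hφapp : ∀ (y : Fin m → ℝ) (t : Fin n),
      φ y t = A i1 t + ∑ k, y k * ((e k : Fin n → ℝ) t) := by
    intro y t
    show (A i1 + ∑ k, y k • ((e k : Fin n → ℝ))) t = _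
    simp only [Pi.add_apply]
    congr 1
    rw [Finset.sum_apply]
    exact Finset.sum_congr rfl fun k _ => rfl
  have hφvec : ∀ lam : Fin p → ℝ, (∑ i, lam i) = 1 →
      φ (Matrix.vecMul lam Vm) = Matrix.vecMul lam A := by
    intro lam hlam
    funext t
    rw [hφapp]
    have hswap : ∑ k, (Matrix.vecMul lam Vm) k * ((e k : Fin n → ℝ) t)
        = ∑ i, lam i * (∑ k, Vm i k * ((e k : Fin n → ℝ) t)) := by
      simp only [Matrix.vecMul, dotProduct, Finset.sum_mul, Finset.mul_sum]
      rw [Finset.sum_comm]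
      exact Finset.sum_congr rfl fun i _ => Finset.sum_congr rfl fun k _ => by ring
    rw [hswap]
    have hAit : ∀ i, A i t = A i1 t + ∑ k, Vm i k * ((e k : Fin n → ℝ) t) := by
      intro i
      rw [← hφV i, hφapp]
    have : Matrix.vecMul lam A t = ∑ i, lam i * A i t := rfl
    rw [this]
    calc A i1 t + ∑ i, lam i * (∑ k, Vm i k * ((e k : Fin n → ℝ) t))
        = (∑ i, lam i) * A i1 t + ∑ i, lam i * (∑ k, Vm i k * ((e k : Fin n → ℝ) t)) := by
          rw [hlam, one_mul]
      _ = ∑ i, (lam i * A i1 t + lam i * (∑ k, Vm i k * ((e k : Fin n → ℝ) t))) := by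
          rw [Finset.sum_add_distrib, Finset.sum_mul]
      _ = ∑ i, lam i * A i t := by
          refine Finset.sum_congr rfl fun i _ => ?_
          rw [hAit i]
          ring
  -- the inequality description data
  set Wm : Matrix (Fin q) (Fin m) ℝ :=
    Matrix.of fun j k => -∑ t, ((e k : Fin n → ℝ)) t * B t j with hWm
  set wv : Fin q → ℝ := fun j => ∑ t, A i1 t * B t j with hwv
  have hWkey : ∀ (y : Fin m → ℝ) (j : Fin q),
      wv j - (Wm.mulVec y) j = Matrix.vecMul (φ y) B j := by
    intro y j
    have h1 : Matrix.vecMul (φ y) B j = ∑ t, φ y t * B t j := rfl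
    have h2 : (Wm.mulVec y) j = ∑ k, (-∑ t, ((e k : Fin n → ℝ)) t * B t j) * y k := rfl
    rw [h1, h2]
    have h3 : ∑ t, φ y t * B t j
        = (∑ t, A i1 t * B t j) + ∑ t, (∑ k, y k * ((e k : Fin n → ℝ) t)) * B t j := by
      rw [← Finset.sum_add_distrib]
      refine Finset.sum_congr rfl fun t _ => ?_
      rw [hφapp]
      ring
    rw [h3]
    have h4 : ∑ t, (∑ k, y k * ((e k : Fin n → ℝ) t)) * B t j
        = ∑ k, y k * (∑ t, ((e k : Fin n → ℝ)) t * B t j) := by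
      simp only [Finset.sum_mul, Finset.mul_sum]
      rw [Finset.sum_comm]
      exact Finset.sum_congr rfl fun k _ => Finset.sum_congr rfl fun t _ => by ring
    rw [h4, hwv]
    simp only [neg_mul]
    rw [Finset.sum_neg_distrib]
    have : ∑ k, (∑ t, ((e k : Fin n → ℝ)) t * B t j) * y k
        = ∑ k, y k * (∑ t, ((e k : Fin n → ℝ)) t * B t j) :=
      Finset.sum_congr rfl fun k _ => by ring
    rw [this]
    ring
  -- characterization of conv hull of rows of A
  have hconvA : ∀ x : Fin n → ℝ,
      x ∈ convexHull ℝ (Set.range fun i => A i) ↔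
        (x ∈ coneOfRows A ∧ ∑ t, x t * d t = 1) := by
    intro x
    rw [mem_rowsConv_iff]
    constructor
    · rintro ⟨y, hy0, hy1, rfl⟩
      exact ⟨⟨y, hy0, rfl⟩, by rw [hsum_eq, hy1]⟩
    · rintro ⟨⟨y, hy0, rfl⟩, hxd⟩
      exact ⟨y, hy0, by rw [hsum_eq] at hxd; exact hxd, rfl⟩
  refine ⟨m, Vm, Wm, wv, ?_, ?_, ?_⟩
  · -- conv hull = inequality description
    ext y
    constructor
    · intro hy
      rw [mem_rowsConv_iff] at hy
      obtain ⟨lam, hlam0, hlam1, rfl⟩ := hy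
      have hφin : Matrix.vecMul lam A ∈ coneOfRows A := ⟨lam, hlam0, rfl⟩
      rw [← hKA] at hφin
      have hφin' : 0 ≤ Matrix.vecMul (φ (Matrix.vecMul lam Vm)) B := by
        rw [hφvec lam hlam1]; exact hφin
      intro j
      have := hφin' j
      rw [← hWkey] at this
      simp only [Set.mem_setOf_eq, Pi.zero_apply] at this ⊢
      linarith [this]
    · intro hy
      simp only [Set.mem_setOf_eq] at hy
      have hpos : 0 ≤ Matrix.vecMul (φ y) B := by
        intro j
        have := hy j
        rw [← hWkey y j]
        simp only [Pi.zero_apply]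
        have : (Wm.mulVec y) j ≤ wv j := hy j
        linarith
      have hφK : φ y ∈ coneOfRows A := by rw [← hKA]; exact hpos
      have hφconv : φ y ∈ convexHull ℝ (Set.range fun i => A i) :=
        (hconvA (φ y)).mpr ⟨hφK, hφd y⟩
      rw [mem_rowsConv_iff] at hφconv
      obtain ⟨lam, hlam0, hlam1, hlameq⟩ := hφconv
      have : φ y = φ (Matrix.vecMul lam Vm) := by rw [hφvec lam hlam1]; exact hlameq
      have hyeq : y = Matrix.vecMul lam Vm := hφinj this
      rw [mem_rowsConv_iff]
      exact ⟨lam, hlam0, hlam1, hyeq⟩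
  · -- two distinct points
    refine ⟨Vm i1, ?_, Vm i2, ?_, ?_⟩
    · exact subset_convexHull ℝ _ ⟨i1, rfl⟩
    · exact subset_convexHull ℝ _ ⟨i2, rfl⟩
    · intro h
      apply hArows
      rw [← hφV i1, ← hφV i2, h]
  · -- slack formula
    intro i j
    have h1 : ∑ k, Wm j k * Vm i k = (Wm.mulVec (Vm i)) j := rfl
    rw [h1, hWkey (Vm i) j, hφV i]
    rw [hMrow i]

end Aux

/-- **Theorem (slack matrices of polytopes).**
A matrix `M ∈ ℝ₊^{p×q}` with `rank M ≥ 2` is a slack matrix of a polytope if and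
only if `M` is a slack matrix of a polyhedral cone and the all-ones vector `𝟙`
lies in the column span of `M`. -/
theorem slack_matrix_of_polytope_iff_cone_and_ones {p q : ℕ}
    (M : Matrix (Fin p) (Fin q) ℝ) (hM : ∀ i j, 0 ≤ M i j) (hrank : 2 ≤ M.rank) :
    IsSlackMatrixOfPolytope M ↔
      IsSlackMatrixOfCone M ∧ ∃ c : Fin q → ℝ, M.mulVec c = 1 := by
  constructor
  · rintro ⟨n, P, V, W, w, hPV, hPW, ⟨u, hu, v, hv, huv⟩, hS⟩
    have hp : 0 < p := by
      have h1 : M.rank ≤ Fintype.card (Fin p) := M.rank_le_card_height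
      simp only [Fintype.card_fin] at h1
      omega
    have hPV' : P = convexHull ℝ (Set.range fun i => V i) := hPV
    obtain ⟨A, B, ⟨hcone, hMAB⟩, hc⟩ :=
      forward_dir M hM V W w P hPV' hPW u v hu hv huv hS hp
    exact ⟨⟨n + 1, A, B, hcone, hMAB⟩, hc⟩
  · rintro ⟨⟨n, A, B, hKA, hMAB⟩, c, hc⟩
    obtain ⟨m, Vm, Wm, wv, heq, hpts, hslack⟩ :=
      backward_dir M hrank A B hKA hMAB c hc
    exact ⟨m, convexHull ℝ (Set.range fun i => Vm i), Vm, Wm, wv, rfl, heq, hpts, hslack⟩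
end

section
/- A nonnegative matrix M ∈ ℝ₊^{p×q} with rank(M) ≥ 2 is a slack matrix of some polytope if and only if M satisfies the RCGC (equivalently, the CCGC) and the all-ones vector 𝟙 ∈ ℝ^p lies in the column span M·ℝ^q of M. -/
open Matrix Set

section Helpers

/-- Membership in the convex hull of a finite family. -/
lemma mem_convexHull_range_iff' {p n : ℕ} (f : Fin p → (Fin n → ℝ)) (x : Fin n → ℝ) :
    x ∈ convexHull ℝ (Set.range f) ↔
      ∃ y : Fin p → ℝ, 0 ≤ y ∧ ∑ i, y i = 1 ∧ ∑ i, y i • f i = x := by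
  constructor
  · intro hx
    rw [convexHull_range_eq_exists_affineCombination] at hx
    obtain ⟨s, wgt, hw0, hw1, hx⟩ := hx
    refine ⟨fun i => if i ∈ s then wgt i else 0, ?_, ?_, ?_⟩
    · intro i; dsimp; split
      · exact hw0 _ ‹_›
      · exact le_refl 0
    · rw [Finset.sum_ite_mem, Finset.univ_inter, hw1]
    · rw [← hx, Finset.affineCombination_eq_linear_combination s f wgt hw1]
      simp only [ite_smul, zero_smul, Finset.sum_ite_mem, Finset.univ_inter]
  · rintro ⟨y, hy0, hy1, rfl⟩
    have := Finset.centerMass_mem_convexHull (Finset.univ : Finset (Fin p))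
      (fun i _ => hy0 i) (by rw [hy1]; exact one_pos)
      (fun i _ => Set.mem_range_self (f := f) i)
    rwa [Finset.centerMass_eq_of_sum_1 _ _ hy1] at this

lemma vecMul_apply' {p q : ℕ} (M : Matrix (Fin p) (Fin q) ℝ) (y : Fin p → ℝ) (j : Fin q) :
    Matrix.vecMul y M j = ∑ i, y i * M i j := by
  simp [Matrix.vecMul, dotProduct]

lemma mulVec_apply' {p q : ℕ} (M : Matrix (Fin p) (Fin q) ℝ) (x : Fin q → ℝ) (i : Fin p) :
    M.mulVec x i = ∑ j, M i j * x j := by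
  simp [Matrix.mulVec, dotProduct]

/-- The basic identity for slack matrices: a row combination of `M` is an affine
function of the corresponding combination of rows of `V`. -/
lemma slack_vecMul_identity {p q n : ℕ} (M : Matrix (Fin p) (Fin q) ℝ)
    (V : Matrix (Fin p) (Fin n) ℝ) (W : Matrix (Fin q) (Fin n) ℝ) (w : Fin q → ℝ)
    (hS : ∀ i j, M i j = w j - ∑ k, W j k * V i k) (y : Fin p → ℝ) :
    Matrix.vecMul y M = (∑ i, y i) • w - W.mulVec (∑ i, y i • V i) := by
  funext j
  rw [vecMul_apply']
  simp only [Pi.sub_apply, Pi.smul_apply, smul_eq_mul, mulVec_apply', Finset.sum_apply,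
    Pi.smul_apply, smul_eq_mul]
  have : ∀ i, y i * M i j = y i * w j - ∑ k, W j k * (y i * V i k) := by
    intro i
    rw [hS i j, mul_sub, Finset.mul_sum]
    congr 1
    exact Finset.sum_congr rfl fun k _ => by ring
  rw [Finset.sum_congr rfl fun i _ => this i, Finset.sum_sub_distrib, ← Finset.sum_mul]
  congr 1
  rw [Finset.sum_comm]
  exact Finset.sum_congr rfl fun k _ => by rw [← Finset.mul_sum]

/-- Escape lemma: a bounded H-polyhedron with two distinct points contains no point `u`
with `W u ≥ w`. -/
lemma no_escape {n q : ℕ} (W : Matrix (Fin q) (Fin n) ℝ) (w : Fin q → ℝ)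
    (C : ℝ) (hC : ∀ x, W.mulVec x ≤ w → ‖x‖ ≤ C)
    (a b : Fin n → ℝ) (ha : W.mulVec a ≤ w) (hb : W.mulVec b ≤ w) (hab : a ≠ b)
    (u : Fin n → ℝ) (hu : w ≤ W.mulVec u) : False := by
  -- pick a point of P different from u
  obtain ⟨x, hx, hxu⟩ : ∃ x, W.mulVec x ≤ w ∧ x ≠ u := by
    by_cases h : a = u
    · exact ⟨b, hb, fun e => hab (h.trans e.symm)⟩
    · exact ⟨a, ha, h⟩
  have key : ∀ k : ℕ, W.mulVec (u + (2 : ℝ) ^ k • (x - u)) ≤ w := by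
    intro k
    induction k with
    | zero => simpa using hx
    | succ k ih =>
      have heq : u + (2 : ℝ) ^ (k + 1) • (x - u)
          = (2 : ℝ) • (u + (2 : ℝ) ^ k • (x - u)) - u := by
        funext t
        simp only [Pi.add_apply, Pi.sub_apply, Pi.smul_apply, smul_eq_mul]
        ring
      rw [heq]
      intro j
      have h1 := ih j
      have h2 := hu j
      have e1 : W.mulVec ((2 : ℝ) • (u + (2 : ℝ) ^ k • (x - u)) - u) j
          = 2 * W.mulVec (u + (2 : ℝ) ^ k • (x - u)) j - W.mulVec u j := by
        simp only [mulVec_apply', Pi.smul_apply, Pi.sub_apply, Pi.add_apply, smul_eq_mul]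
        rw [Finset.mul_sum, ← Finset.sum_sub_distrib]
        exact Finset.sum_congr rfl fun t _ => by ring
      rw [e1]
      linarith
  have hxunorm : (0 : ℝ) < ‖x - u‖ := by
    rw [norm_pos_iff]
    exact sub_ne_zero_of_ne hxu
  obtain ⟨k, hk⟩ := pow_unbounded_of_one_lt ((C + ‖u‖) / ‖x - u‖) (one_lt_two (α := ℝ))
  have hk' : C + ‖u‖ < 2 ^ k * ‖x - u‖ := by
    rwa [div_lt_iff₀ hxunorm] at hk
  have hnorm : ‖u + (2 : ℝ) ^ k • (x - u)‖ ≤ C := hC _ (key k)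
  have : (2 : ℝ) ^ k * ‖x - u‖ ≤ C + ‖u‖ := by
    have h1 : ‖(2 : ℝ) ^ k • (x - u)‖ = 2 ^ k * ‖x - u‖ := by
      rw [norm_smul, Real.norm_eq_abs, abs_of_pos (by positivity)]
    calc (2 : ℝ) ^ k * ‖x - u‖ = ‖(u + (2 : ℝ) ^ k • (x - u)) - u‖ := by
          rw [add_sub_cancel_left, h1]
      _ ≤ ‖u + (2 : ℝ) ^ k • (x - u)‖ + ‖u‖ := norm_sub_le _ _
      _ ≤ C + ‖u‖ := by linarith
  linarith

/-- Recession lemma: a bounded nonempty H-polyhedron has trivial recession cone. -/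
lemma recession_zero {n q : ℕ} (W : Matrix (Fin q) (Fin n) ℝ) (w : Fin q → ℝ)
    (C : ℝ) (hC : ∀ x, W.mulVec x ≤ w → ‖x‖ ≤ C)
    (x₀ : Fin n → ℝ) (hx₀ : W.mulVec x₀ ≤ w)
    (v : Fin n → ℝ) (hv : W.mulVec v ≤ 0) : v = 0 := by
  by_contra hvne
  have hvpos : (0 : ℝ) < ‖v‖ := by rwa [norm_pos_iff]
  have key : ∀ t : ℝ, 0 ≤ t → W.mulVec (x₀ + t • v) ≤ w := by
    intro t ht j
    have e1 : W.mulVec (x₀ + t • v) j = W.mulVec x₀ j + t * W.mulVec v j := by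
      simp only [mulVec_apply', Pi.add_apply, Pi.smul_apply, smul_eq_mul]
      rw [Finset.mul_sum, ← Finset.sum_add_distrib]
      exact Finset.sum_congr rfl fun s _ => by ring
    rw [e1]
    have h1 := hx₀ j
    have h2 := hv j
    have h3 : t * W.mulVec v j ≤ 0 := mul_nonpos_of_nonneg_of_nonpos ht h2
    linarith
  obtain ⟨m, hm⟩ := exists_nat_gt ((C + ‖x₀‖) / ‖v‖)
  have hm' : C + ‖x₀‖ < (m : ℝ) * ‖v‖ := by
    rwa [div_lt_iff₀ hvpos] at hm
  have hmem := key m (Nat.cast_nonneg m)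
  have hnorm : ‖x₀ + (m : ℝ) • v‖ ≤ C := hC _ hmem
  have : (m : ℝ) * ‖v‖ ≤ C + ‖x₀‖ := by
    calc (m : ℝ) * ‖v‖ = ‖(x₀ + (m : ℝ) • v) - x₀‖ := by
          rw [add_sub_cancel_left, norm_smul, Real.norm_eq_abs,
            abs_of_nonneg (Nat.cast_nonneg m)]
      _ ≤ ‖x₀ + (m : ℝ) • v‖ + ‖x₀‖ := norm_sub_le _ _
      _ ≤ C + ‖x₀‖ := by linarith
  linarith

end Helpers

open scoped RealInnerProductSpace

/-- **Corollary.** A matrix `M ∈ ℝ₊^{p×q}` with `rank M ≥ 2` is a slack matrix of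
some polytope if and only if it satisfies the RCGC and `𝟙 ∈ M·ℝ^q`. -/
theorem slack_matrix_of_polytope_iff_RCGC_and_ones {p q : ℕ}
    (M : Matrix (Fin p) (Fin q) ℝ) (hM : ∀ i j, 0 ≤ M i j) (hrank : 2 ≤ M.rank) :
    IsSlackMatrixOfPolytope M ↔
      RCGC M ∧ ∃ c : Fin q → ℝ, M.mulVec c = 1 := by
  constructor
  · rintro ⟨n, P, V, W, w, hPV, hPW, ⟨a, ha, b, hb, hab⟩, hS⟩
    have haw : W.mulVec a ≤ w := by rw [hPW] at ha; exact ha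
    have hbw : W.mulVec b ≤ w := by rw [hPW] at hb; exact hb
    obtain ⟨C, hC⟩ : ∃ C, ∀ x, W.mulVec x ≤ w → ‖x‖ ≤ C := by
      have hcpt : IsCompact (convexHull ℝ (Set.range fun i => V i)) :=
        (Set.finite_range _).isCompact_convexHull ℝ
      obtain ⟨C, hC⟩ := isBounded_iff_forall_norm_le.mp hcpt.isBounded
      refine ⟨C, fun x hx => hC x ?_⟩
      have hxP : x ∈ P := by rw [hPW]; exact hx
      rw [hPV] at hxP; exact hxP
    constructor
    · -- RCGC
      apply Set.Subset.antisymm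
      · rintro z ⟨y, hy0, rfl⟩
        refine ⟨⟨y, rfl⟩, ?_⟩
        intro j
        show (0 : ℝ) ≤ Matrix.vecMul y M j
        rw [vecMul_apply']
        exact Finset.sum_nonneg fun i _ => mul_nonneg (hy0 i) (hM i j)
      · rintro z ⟨⟨y, rfl⟩, hz0⟩
        have hid := slack_vecMul_identity M V W w hS y
        have hWv : ∀ j, W.mulVec (∑ i, y i • V i) j ≤ (∑ i, y i) * w j := by
          intro j
          have h0 : (0 : Fin q → ℝ) ≤ (∑ i, y i) • w - W.mulVec (∑ i, y i • V i) :=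
            hid ▸ hz0
          have h1 := h0 j
          simp only [Pi.sub_apply, Pi.smul_apply, smul_eq_mul, Pi.zero_apply] at h1
          linarith
        rcases lt_trichotomy (∑ i, y i) 0 with hneg | hzero | hpos
        · exfalso
          refine no_escape W w C hC a b haw hbw hab
            ((∑ i, y i)⁻¹ • (∑ i, y i • V i)) ?_
          intro j
          have e : W.mulVec ((∑ i, y i)⁻¹ • ∑ i, y i • V i) j
              = (∑ i, y i)⁻¹ * W.mulVec (∑ i, y i • V i) j := by
            simp only [mulVec_apply', Pi.smul_apply, smul_eq_mul]
            rw [Finset.mul_sum]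
            exact Finset.sum_congr rfl fun k _ => by ring
          rw [e]
          have h1 := hWv j
          have h2 : (∑ i, y i)⁻¹ * ((∑ i, y i) * w j)
              ≤ (∑ i, y i)⁻¹ * W.mulVec (∑ i, y i • V i) j :=
            mul_le_mul_of_nonpos_left h1 (le_of_lt (inv_lt_zero.mpr hneg))
          rwa [← mul_assoc, inv_mul_cancel₀ (ne_of_lt hneg), one_mul] at h2
        · have hv0 : (∑ i, y i • V i) = 0 := by
            refine recession_zero W w C hC a haw (∑ i, y i • V i) ?_
            intro j
            have h1 := hWv j
            rw [hzero, zero_mul] at h1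
            simpa using h1
          refine ⟨0, le_refl 0, ?_⟩
          rw [Matrix.zero_vecMul, hid, hzero, hv0]
          simp
        · have hmem : (∑ i, y i)⁻¹ • (∑ i, y i • V i)
              ∈ convexHull ℝ (Set.range fun i => V i) := by
            have hWle : W.mulVec ((∑ i, y i)⁻¹ • ∑ i, y i • V i) ≤ w := by
              intro j
              have e : W.mulVec ((∑ i, y i)⁻¹ • ∑ i, y i • V i) j
                  = (∑ i, y i)⁻¹ * W.mulVec (∑ i, y i • V i) j := by
                simp only [mulVec_apply', Pi.smul_apply, smul_eq_mul]
                rw [Finset.mul_sum]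
                exact Finset.sum_congr rfl fun k _ => by ring
              rw [e]
              have h1 := hWv j
              have h2 : (∑ i, y i)⁻¹ * W.mulVec (∑ i, y i • V i) j
                  ≤ (∑ i, y i)⁻¹ * ((∑ i, y i) * w j) :=
                mul_le_mul_of_nonneg_left h1 (le_of_lt (inv_pos.mpr hpos))
              rwa [← mul_assoc, inv_mul_cancel₀ (ne_of_gt hpos), one_mul] at h2
            have hmP : (∑ i, y i)⁻¹ • (∑ i, y i • V i) ∈ P := by rw [hPW]; exact hWle
            rw [hPV] at hmP; exact hmP
          obtain ⟨lam, hl0, hl1, hlv⟩ := (mem_convexHull_range_iff' _ _).mp hmem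
          refine ⟨fun i => (∑ i', y i') * lam i,
            fun i => mul_nonneg (le_of_lt hpos) (hl0 i), ?_⟩
          have e1 : ∑ i, (∑ i', y i') * lam i = ∑ i', y i' := by
            rw [← Finset.mul_sum, hl1, mul_one]
          have e2 : (∑ i, ((∑ i', y i') * lam i) • V i) = ∑ i, y i • V i := by
            have h3 : ∀ i : Fin p, ((∑ i', y i') * lam i) • V i
                = (∑ i', y i') • (lam i • V i) := fun i => (smul_smul _ _ _).symm
            rw [Finset.sum_congr rfl fun i _ => h3 i, ← Finset.smul_sum, hlv,
              smul_smul, mul_inv_cancel₀ (ne_of_gt hpos), one_smul]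
          rw [hid, slack_vecMul_identity M V W w hS, e1, e2]
    · -- existence of c with M c = 1
      classical
      let eqv := WithLp.linearEquiv 2 ℝ (Fin q → ℝ)
      let col : Fin n → EuclideanSpace ℝ (Fin q) := fun k => eqv.symm (fun j => W j k)
      let U : Submodule ℝ (EuclideanSpace ℝ (Fin q)) := Submodule.span ℝ (Set.range col)
      let w' : EuclideanSpace ℝ (Fin q) := eqv.symm w
      by_cases hw : w' ∈ U
      · exfalso
        obtain ⟨d, hd⟩ := (Submodule.mem_span_range_iff_exists_fun ℝ).mp hw
        have hd' : ∑ k, d k • (fun j => W j k) = w := by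
          have h := congrArg eqv hd
          rw [map_sum] at h
          simpa only [col, w', _root_.map_smul, LinearEquiv.apply_symm_apply] using h
        refine no_escape W w C hC a b haw hbw hab d ?_
        intro j
        have h2 := congrFun hd' j
        simp only [Finset.sum_apply, Pi.smul_apply, smul_eq_mul] at h2
        have h3 : W.mulVec d j = w j := by
          rw [mulVec_apply', ← h2]
          exact Finset.sum_congr rfl fun k _ => mul_comm _ _
        rw [h3]
      · set c₀ : EuclideanSpace ℝ (Fin q) := w' - Submodule.orthogonalProjection U w' with hc₀def
        have hc₀ : c₀ ≠ 0 := by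
          intro h
          apply hw
          rw [sub_eq_zero] at h
          rw [h]
          exact SetLike.coe_mem _
        have hperp : c₀ ∈ Uᗮ := Submodule.sub_starProjection_mem_orthogonal w'
        have hinner : ∀ u ∈ U, ⟪u, c₀⟫ = 0 :=
          (Submodule.mem_orthogonal U c₀).mp hperp
        have hcw : ⟪c₀, w'⟫ = ‖c₀‖ ^ 2 := by
          have h1 : ⟪c₀, ((Submodule.orthogonalProjection U w' : U) : EuclideanSpace ℝ (Fin q))⟫ = 0 := by
            rw [real_inner_comm]
            exact hinner _ (SetLike.coe_mem _)
          have h2 : w' = c₀ + ((Submodule.orthogonalProjection U w' : U) : EuclideanSpace ℝ (Fin q)) := by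
            rw [hc₀def]; abel
          calc ⟪c₀, w'⟫
              = ⟪c₀, c₀ + ((Submodule.orthogonalProjection U w' : U) : EuclideanSpace ℝ (Fin q))⟫ := by
                rw [← h2]
            _ = ⟪c₀, c₀⟫ + ⟪c₀, ((Submodule.orthogonalProjection U w' : U) : EuclideanSpace ℝ (Fin q))⟫ :=
                inner_add_right _ _ _
            _ = ‖c₀‖ ^ 2 := by rw [h1, real_inner_self_eq_norm_sq]; ring
        have hcwpos : 0 < ⟪c₀, w'⟫ := by
          rw [hcw]
          have := norm_pos_iff.mpr hc₀
          positivity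
        have hip : ∀ x : EuclideanSpace ℝ (Fin q), ⟪c₀, x⟫ = ∑ j, c₀ j * x j := by
          intro x
          simp [PiLp.inner_apply, RCLike.inner_apply, conj_trivial, mul_comm]
        have hcol0 : ∀ k, ∑ j, c₀ j * W j k = 0 := by
          intro k
          have h := hinner (col k) (Submodule.subset_span (Set.mem_range_self k))
          rw [real_inner_comm, hip] at h
          simpa [col, eqv] using h
        have hw1 : ∑ j, c₀ j * w j = ⟪c₀, w'⟫ := by
          rw [hip]
          simp [w', eqv]
        refine ⟨fun j => (⟪c₀, w'⟫)⁻¹ * c₀ j, ?_⟩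
        funext i
        show Matrix.mulVec M _ i = 1
        rw [mulVec_apply']
        have key : ∑ j, (w j - ∑ k, W j k * V i k) * c₀ j
            = ∑ j, c₀ j * w j - ∑ k, (∑ j, c₀ j * W j k) * V i k := by
          simp only [sub_mul]
          rw [Finset.sum_sub_distrib]
          congr 1
          · exact Finset.sum_congr rfl fun j _ => mul_comm _ _
          · have h4 : ∀ j, (∑ k, W j k * V i k) * c₀ j = ∑ k, c₀ j * W j k * V i k := by
              intro j
              rw [Finset.sum_mul]
              exact Finset.sum_congr rfl fun k _ => by ring
            rw [Finset.sum_congr rfl fun j _ => h4 j, Finset.sum_comm]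
            exact Finset.sum_congr rfl fun k _ => by rw [Finset.sum_mul]
        have step1 : ∑ j, M i j * ((⟪c₀, w'⟫)⁻¹ * c₀ j)
            = (⟪c₀, w'⟫)⁻¹ * ∑ j, (w j - ∑ k, W j k * V i k) * c₀ j := by
          rw [Finset.mul_sum]
          exact Finset.sum_congr rfl fun j _ => by rw [hS i j]; ring
        rw [step1, key, hw1]
        have hz : ∑ k, (∑ j, c₀ j * W j k) * V i k = 0 := by
          apply Finset.sum_eq_zero
          intro k _
          rw [hcol0 k, zero_mul]
        rw [hz, sub_zero, inv_mul_cancel₀ (ne_of_gt hcwpos)]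
  · rintro ⟨hR, c, hc⟩
    classical
    have hp2 : 2 ≤ p := le_trans hrank (by simpa using M.rank_le_card_height)
    have hp : 0 < p := by omega
    let i₀ : Fin p := ⟨0, hp⟩
    let φ : (Fin q → ℝ) →ₗ[ℝ] ℝ :=
      { toFun := fun z => ∑ j, z j * c j
        map_add' := fun x y => by
          simp [add_mul, Finset.sum_add_distrib]
        map_smul' := fun r x => by
          simp [Finset.mul_sum, mul_assoc] }
    have hφrow : ∀ i, φ (M i) = 1 := by
      intro i
      have h := congrFun hc i
      rw [mulVec_apply'] at h
      have h2 : (1 : Fin p → ℝ) i = 1 := rfl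
      rw [h2] at h
      exact h
    let L : Submodule ℝ (Fin q → ℝ) := LinearMap.range M.vecMulLinear
    have hrowL : ∀ i, M i ∈ L := fun i =>
      ⟨Pi.single i 1, by simp [Matrix.vecMulLinear_apply, Matrix.single_one_vecMul, Matrix.row]⟩
    let D : Submodule ℝ (Fin q → ℝ) := L ⊓ LinearMap.ker φ
    have hrowD : ∀ i, M i - M i₀ ∈ D := fun i =>
      ⟨L.sub_mem (hrowL i) (hrowL i₀), by
        simp [LinearMap.mem_ker, map_sub, hφrow]⟩
    let bD : Module.Basis (Fin (Module.finrank ℝ D)) ℝ D := Module.finBasis ℝ D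
    let dd : Fin p → D := fun i => ⟨M i - M i₀, hrowD i⟩
    let V : Matrix (Fin p) (Fin (Module.finrank ℝ D)) ℝ :=
      Matrix.of fun i k => bD.equivFun (dd i) k
    let F : (Fin (Module.finrank ℝ D) → ℝ) →ₗ[ℝ] (Fin q → ℝ) :=
      D.subtype ∘ₗ (bD.equivFun.symm.toLinearMap)
    have hFinj : Function.Injective F :=
      D.injective_subtype.comp bD.equivFun.symm.injective
    have hFD : ∀ u, F u ∈ D := fun u => SetLike.coe_mem _
    have hFV : ∀ i, F (V i) = M i - M i₀ := by
      intro i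
      show (D.subtype) (bD.equivFun.symm (bD.equivFun (dd i))) = _
      rw [LinearEquiv.symm_apply_apply]
      rfl
    have hFapply : ∀ (u : Fin (Module.finrank ℝ D) → ℝ) (j : Fin q),
        F u j = ∑ k, u k * (bD k : Fin q → ℝ) j := by
      intro u j
      show (↑(bD.equivFun.symm u) : Fin q → ℝ) j = _
      rw [Module.Basis.equivFun_symm_apply]
      rw [show ((↑(∑ k, u k • bD k) : Fin q → ℝ)) = ∑ k, u k • (bD k : Fin q → ℝ) by
        push_cast [Submodule.coe_sum]; rfl]
      simp [Finset.sum_apply]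
    let W' : Matrix (Fin q) (Fin (Module.finrank ℝ D)) ℝ :=
      Matrix.of fun j k => -(bD k : Fin q → ℝ) j
    have hWF : ∀ (u : Fin (Module.finrank ℝ D) → ℝ) (j : Fin q),
        W'.mulVec u j = -(F u j) := by
      intro u j
      rw [mulVec_apply', hFapply]
      simp only [W', Matrix.of_apply, neg_mul]
      rw [← Finset.sum_neg_distrib]
      exact Finset.sum_congr rfl fun k _ => by ring
    have hslack : ∀ i j, M i j = M i₀ j - ∑ k, W' j k * V i k := by
      intro i j
      have h1 : ∑ k, W' j k * V i k = -(F (V i) j) := by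
        rw [← mulVec_apply' W' (V i) j, hWF]
      rw [h1, hFV]
      simp [Pi.sub_apply]
    have hHrep : convexHull ℝ (Set.range fun i => V i) = {x | W'.mulVec x ≤ M i₀} := by
      apply Set.Subset.antisymm
      · apply convexHull_min
        · rintro x ⟨i, rfl⟩
          intro j
          show W'.mulVec (V i) j ≤ M i₀ j
          rw [hWF, hFV]
          have := hM i j
          simp only [Pi.sub_apply, neg_sub]
          linarith
        · intro x hx y hy α β hα hβ hαβ
          intro j
          have e : W'.mulVec (α • x + β • y) j = α * W'.mulVec x j + β * W'.mulVec y j := by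
            simp only [mulVec_apply', Pi.add_apply, Pi.smul_apply, smul_eq_mul]
            rw [Finset.mul_sum, Finset.mul_sum, ← Finset.sum_add_distrib]
            exact Finset.sum_congr rfl fun k _ => by ring
          show W'.mulVec (α • x + β • y) j ≤ M i₀ j
          rw [e]
          calc α * W'.mulVec x j + β * W'.mulVec y j
              ≤ α * M i₀ j + β * M i₀ j :=
                add_le_add (mul_le_mul_of_nonneg_left (hx j) hα)
                  (mul_le_mul_of_nonneg_left (hy j) hβ)
            _ = M i₀ j := by rw [← add_mul, hαβ, one_mul]
      · intro x hx
        have hsL : ∃ y, M i₀ + F x = Matrix.vecMul y M := by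
          obtain ⟨y₂, hy₂⟩ := (hFD x).1
          refine ⟨Pi.single i₀ 1 + y₂, ?_⟩
          rw [Matrix.add_vecMul, Matrix.single_one_vecMul]
          rw [show Matrix.vecMul y₂ M = F x from hy₂]
          rfl
        have hs0 : (0 : Fin q → ℝ) ≤ M i₀ + F x := by
          intro j
          have h1 := hx j
          rw [hWF] at h1
          show (0 : ℝ) ≤ M i₀ j + F x j
          linarith
        have hmem : M i₀ + F x ∈ {z : Fin q → ℝ | ∃ y, 0 ≤ y ∧ z = Matrix.vecMul y M} := by
          rw [hR]
          exact ⟨hsL, hs0⟩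
        obtain ⟨y', hy'0, hy's⟩ := hmem
        have hy'sum : ∑ i, y' i = 1 := by
          have h1 : φ (M i₀ + F x) = 1 := by
            rw [map_add, hφrow]
            have : φ (F x) = 0 := (hFD x).2
            rw [this, add_zero]
          have h2 : φ (M i₀ + F x) = ∑ i, y' i := by
            rw [hy's, vecMul_eq_sum_smul, map_sum]
            simp [hφrow]
          rw [← h2]; exact h1
        have hxeq : x = ∑ i, y' i • V i := by
          apply hFinj
          rw [map_sum]
          have h3 : ∑ i, F (y' i • V i) = ∑ i, y' i • (M i - M i₀) :=
            Finset.sum_congr rfl fun i _ => by rw [_root_.map_smul, hFV]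
          rw [h3]
          have e1 : ∑ i, y' i • (M i - M i₀) = (∑ i, y' i • M i) - M i₀ := by
            have h4 : ∀ i : Fin p, y' i • (M i - M i₀) = y' i • M i - y' i • M i₀ :=
              fun i => smul_sub _ _ _
            rw [Finset.sum_congr rfl fun i _ => h4 i, Finset.sum_sub_distrib,
              ← Finset.sum_smul, hy'sum, one_smul]
          rw [e1, ← vecMul_eq_sum_smul, ← hy's]
          exact (add_sub_cancel_left _ _).symm
        exact (mem_convexHull_range_iff' _ _).mpr ⟨y', hy'0, hy'sum, hxeq.symm⟩
    have hdist : ∃ i i' : Fin p, M i ≠ M i' := by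
      by_contra hcon
      push_neg at hcon
      have hne1 : (fun _ => (1 : ℝ) : Fin p → ℝ) ≠ 0 :=
        fun h => one_ne_zero (congrFun h i₀)
      have hle : LinearMap.range M.mulVecLin ≤ Submodule.span ℝ {(fun _ => 1 : Fin p → ℝ)} := by
        rintro z ⟨x, rfl⟩
        rw [Submodule.mem_span_singleton]
        refine ⟨∑ j, M i₀ j * x j, ?_⟩
        funext i
        simp only [Pi.smul_apply, smul_eq_mul, mul_one]
        rw [Matrix.mulVecLin_apply, mulVec_apply']
        exact Finset.sum_congr rfl fun j _ => by rw [hcon i i₀]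
      have hrk : M.rank ≤ 1 := by
        show Module.finrank ℝ (LinearMap.range M.mulVecLin) ≤ 1
        exact le_trans (Submodule.finrank_mono hle)
          (le_of_eq (finrank_span_singleton hne1))
      omega
    obtain ⟨ia, ib, hiab⟩ := hdist
    have hVab : V ia ≠ V ib := by
      intro h
      apply hiab
      have h2 : M ia - M i₀ = M ib - M i₀ := by rw [← hFV ia, ← hFV ib, h]
      have h3 := congrArg (fun z => z + M i₀) h2
      simpa using h3
    refine ⟨Module.finrank ℝ D, rowsConv V, V, W', M i₀, rfl, hHrep, ?_, hslack⟩
    exact ⟨V ia, subset_convexHull ℝ _ (Set.mem_range_self ia),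
      V ib, subset_convexHull ℝ _ (Set.mem_range_self ib), hVab⟩
end

section
/- A nonnegative matrix M ∈ ℝ₊^{p×q} with rank(M) ≥ 2 is a slack matrix of some polytope if and only if the convex hull of the rows of M coincides with the intersection of the affine hull of the rows of M with the nonnegative orthant: conv(rows(M)) = aff(rows(M)) ∩ ℝ₊^q. -/
open Matrix Set

/-- Membership in the convex hull of the range of a finite family, as an explicit
convex combination. -/
lemma mem_convexHull_range_fin_iff {m n : ℕ} {f : Fin m → (Fin n → ℝ)} {x : Fin n → ℝ} :
    x ∈ convexHull ℝ (Set.range f) ↔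
      ∃ μ : Fin m → ℝ, (∀ i, 0 ≤ μ i) ∧ ∑ i, μ i = 1 ∧ x = ∑ i, μ i • f i := by
  classical
  rw [convexHull_range_eq_exists_affineCombination]
  constructor
  · rintro ⟨s, w, h0, h1, rfl⟩
    refine ⟨fun i => if i ∈ s then w i else 0, fun i => ?_, ?_, ?_⟩
    · by_cases h : i ∈ s <;> simp [h, h0 i]
    · rw [Finset.sum_ite_mem, Finset.univ_inter, h1]
    · rw [Finset.affineCombination_eq_linear_combination _ _ _ h1]
      symm
      calc ∑ i : Fin m, (if i ∈ s then w i else 0) • f i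
          = ∑ i : Fin m, (if i ∈ s then w i • f i else 0) := by
            refine Finset.sum_congr rfl fun i _ => ?_
            by_cases h : i ∈ s <;> simp [h]
        _ = ∑ i ∈ s, w i • f i := by rw [Finset.sum_ite_mem, Finset.univ_inter]
  · rintro ⟨μ, h0, h1, rfl⟩
    exact ⟨Finset.univ, μ, fun i _ => h0 i, h1,
      Finset.affineCombination_eq_linear_combination _ _ _ h1⟩

/-- Membership in the affine span of the range of a finite family, as an explicit
affine combination. -/
lemma mem_affineSpan_range_fin_iff {m n : ℕ} {f : Fin m → (Fin n → ℝ)} {x : Fin n → ℝ} :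
    x ∈ affineSpan ℝ (Set.range f) ↔
      ∃ lam : Fin m → ℝ, ∑ i, lam i = 1 ∧ x = ∑ i, lam i • f i := by
  constructor
  · intro h
    obtain ⟨w, hw, hx⟩ := eq_affineCombination_of_mem_affineSpan_of_fintype h
    exact ⟨w, hw, by rw [hx, Finset.affineCombination_eq_linear_combination _ _ _ hw]⟩
  · rintro ⟨lam, h1, rfl⟩
    rw [← Finset.affineCombination_eq_linear_combination _ _ _ h1]
    exact affineCombination_mem_affineSpan h1 f

/-- **Corollary (geometric characterization).**
A matrix `M ∈ ℝ₊^{p×q}` with `rank M ≥ 2` is a slack matrix of some polytope if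
and only if `conv(rows M) = aff(rows M) ∩ ℝ₊^q`. -/
theorem slack_matrix_of_polytope_iff_conv_eq_aff_inter {p q : ℕ}
    (M : Matrix (Fin p) (Fin q) ℝ) (hM : ∀ i j, 0 ≤ M i j) (hrank : 2 ≤ M.rank) :
    IsSlackMatrixOfPolytope M ↔
      convexHull ℝ (Set.range fun i => M i) =
        (affineSpan ℝ (Set.range fun i => M i) : Set (Fin q → ℝ)) ∩ {x | 0 ≤ x} := by
  classical
  constructor
  · -- forward direction
    rintro ⟨n, P, V, W, w, hPV, hPW, -, hS⟩
    -- key computation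
    have key : ∀ lam : Fin p → ℝ, ∑ i, lam i = 1 → ∀ j,
        (∑ i, lam i • M i) j = w j - ∑ k, W j k * ((∑ i, lam i • V i) k) := by
      intro lam hlam j
      simp only [Finset.sum_apply, Pi.smul_apply, smul_eq_mul]
      have expand : ∀ i, lam i * M i j = lam i * w j - ∑ k, W j k * (lam i * V i k) := by
        intro i
        rw [hS i j, mul_sub, Finset.mul_sum]
        congr 1
        refine Finset.sum_congr rfl fun k _ => by ring
      rw [Finset.sum_congr rfl fun i _ => expand i, Finset.sum_sub_distrib,
        ← Finset.sum_mul, hlam, one_mul, Finset.sum_comm]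
      congr 1
      refine Finset.sum_congr rfl fun k _ => ?_
      rw [← Finset.mul_sum]
    apply Set.Subset.antisymm
    · intro z hz
      obtain ⟨μ, h0, h1, rfl⟩ := mem_convexHull_range_fin_iff.1 hz
      refine ⟨?_, ?_⟩
      · rw [SetLike.mem_coe, ← Finset.affineCombination_eq_linear_combination _ (fun i => M i) _ h1]
        exact affineCombination_mem_affineSpan h1 _
      · intro j
        simp only [Finset.sum_apply, Pi.smul_apply, smul_eq_mul, Pi.zero_apply]
        exact Finset.sum_nonneg fun i _ => mul_nonneg (h0 i) (hM i j)
    · rintro z ⟨hzaff, hz0⟩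
      obtain ⟨lam, hlam, rfl⟩ := mem_affineSpan_range_fin_iff.1 hzaff
      set x : Fin n → ℝ := ∑ i, lam i • V i with hx
      have hxP : x ∈ P := by
        rw [hPW]
        show Matrix.mulVec W x ≤ w
        rw [Pi.le_def]
        intro j
        have := hz0 j
        simp only [Pi.zero_apply] at this
        rw [key lam hlam j] at this
        simp only [Matrix.mulVec, dotProduct]
        linarith
      rw [hPV] at hxP
      obtain ⟨μ, h0, h1, hxe⟩ := mem_convexHull_range_fin_iff.1 hxP
      rw [mem_convexHull_range_fin_iff]
      refine ⟨μ, h0, h1, ?_⟩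
      funext j
      rw [key lam hlam j, key μ h1 j, ← hxe, ← hx]
  · -- backward direction
    intro hconv
    have hp2 : 2 ≤ p := hrank.trans M.rank_le_height
    have i0 : Fin p := ⟨0, by omega⟩
    -- two distinct rows
    have hrows : ∃ i i' : Fin p, M i ≠ M i' := by
      by_contra hcon
      push_neg at hcon
      have hle : LinearMap.range M.mulVecLin ≤
          Submodule.span ℝ {(fun _ => (1 : ℝ) : Fin p → ℝ)} := by
        rintro x ⟨c, rfl⟩
        have hx : M.mulVecLin c = (∑ j, M i0 j * c j) • (fun _ => (1 : ℝ)) := by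
          funext i
          simp [Matrix.mulVecLin_apply, Matrix.mulVec, dotProduct, hcon i i0]
        rw [hx]
        exact Submodule.smul_mem _ _ (Submodule.mem_span_singleton_self _)
      have h1 : Module.finrank ℝ (Submodule.span ℝ {(fun _ => (1 : ℝ) : Fin p → ℝ)}) = 1 :=
        finrank_span_singleton (by
          intro h
          have := congrFun h i0
          norm_num at this)
      have : M.rank ≤ 1 := by
        rw [Matrix.rank]
        calc Module.finrank ℝ (LinearMap.range M.mulVecLin)
            ≤ Module.finrank ℝ (Submodule.span ℝ {(fun _ => (1 : ℝ) : Fin p → ℝ)}) :=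
              Submodule.finrank_mono hle
          _ = 1 := h1
      omega
    obtain ⟨ia, ib, hab⟩ := hrows
    set D : Submodule ℝ (Fin q → ℝ) := vectorSpan ℝ (Set.range fun i => M i) with hD
    set c : Fin q → ℝ := M i0 with hc
    set d : ℕ := Module.finrank ℝ D with hd
    set e : D ≃ₗ[ℝ] (Fin d → ℝ) := (Module.finBasis ℝ D).equivFun with he
    set E : (Fin d → ℝ) →ₗ[ℝ] (Fin q → ℝ) := D.subtype ∘ₗ e.symm.toLinearMap with hE
    have hEval : ∀ t, E t = (e.symm t : Fin q → ℝ) := fun t => rfl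
    have hEinj : Function.Injective E := by
      intro a b hab'
      have := Subtype.ext (hEval a ▸ hEval b ▸ hab')
      exact e.symm.injective this
    set Em : Matrix (Fin q) (Fin d) ℝ := LinearMap.toMatrix' E with hEm
    have hEmul : ∀ t, Em.mulVec t = E t := by
      intro t
      rw [← Matrix.toLin'_apply, hEm, Matrix.toLin'_toMatrix']
    -- the affine parametrization
    set φ : (Fin d → ℝ) → (Fin q → ℝ) := fun t => c + E t with hφ
    have hφinj : Function.Injective φ := by
      intro a b h
      apply hEinj
      have h' : c + E a = c + E b := h
      exact add_left_cancel h'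
    have hmem : ∀ i : Fin p, M i - c ∈ D := by
      intro i
      have := vsub_mem_vectorSpan ℝ (Set.mem_range_self (f := fun i => M i) i)
        (Set.mem_range_self (f := fun i => M i) i0)
      simpa [vsub_eq_sub, hD, hc] using this
    set V : Matrix (Fin p) (Fin d) ℝ := fun i => e ⟨M i - c, hmem i⟩ with hV
    have hφV : ∀ i, φ (V i) = M i := by
      intro i
      simp only [hφ, hV, hEval, LinearEquiv.symm_apply_apply]
      abel
    set W : Matrix (Fin q) (Fin d) ℝ := -Em with hW
    have hWmul : ∀ t, W.mulVec t = -(E t) := by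
      intro t
      rw [hW, Matrix.neg_mulVec, hEmul]
    -- the polytope
    set P : Set (Fin d → ℝ) := rowsConv V with hP
    have himg : φ '' P = convexHull ℝ (Set.range fun i => M i) := by
      have hφaff : φ = ⇑((AffineEquiv.constVAdd ℝ (Fin q → ℝ) c).toAffineMap.comp
          E.toAffineMap) := by
        funext t
        simp [hφ, AffineEquiv.constVAdd_apply, vadd_eq_add]
      rw [hP, rowsConv, hφaff, AffineMap.image_convexHull, ← Set.range_comp]
      rw [← hφaff]
      have hcomp : (φ ∘ fun i => V i) = fun i => M i := funext hφV
      rw [hcomp]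
    have hpre : P = φ ⁻¹' (convexHull ℝ (Set.range fun i => M i)) := by
      rw [← himg, Set.preimage_image_eq _ hφinj]
    have hrangeφ : ∀ t, φ t ∈ affineSpan ℝ (Set.range fun i => M i) := by
      intro t
      have hct : E t ∈ (affineSpan ℝ (Set.range fun i => M i)).direction := by
        rw [direction_affineSpan]
        rw [hEval]
        exact (e.symm t).2
      have hcm : c ∈ affineSpan ℝ (Set.range fun i => M i) :=
        subset_affineSpan ℝ _ (Set.mem_range_self i0)
      have := AffineSubspace.vadd_mem_of_mem_direction hct hcm
      simpa [hφ, vadd_eq_add, add_comm] using this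
    have hPW : P = {x | W.mulVec x ≤ c} := by
      rw [hpre, hconv]
      ext t
      simp only [Set.mem_preimage, Set.mem_inter_iff, Set.mem_setOf_eq, SetLike.mem_coe]
      constructor
      · rintro ⟨-, h0⟩
        rw [hWmul, Pi.le_def]
        intro j
        rw [Pi.le_def] at h0
        have := h0 j
        simp only [hφ, Pi.add_apply, Pi.zero_apply] at this
        simp only [Pi.neg_apply]
        linarith
      · intro h
        refine ⟨hrangeφ t, ?_⟩
        rw [hWmul, Pi.le_def] at h
        rw [Pi.le_def]
        intro j
        have := h j
        simp only [Pi.neg_apply] at this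
        simp only [hφ, Pi.add_apply, Pi.zero_apply]
        linarith
    refine ⟨d, P, V, W, c, rfl, hPW, ?_, ?_⟩
    · refine ⟨V ia, ?_, V ib, ?_, ?_⟩
      · exact subset_convexHull ℝ _ (Set.mem_range_self ia)
      · exact subset_convexHull ℝ _ (Set.mem_range_self ib)
      · intro h
        exact hab (by rw [← hφV ia, ← hφV ib, h])
    · intro i j
      have h1 : ∑ k, W j k * V i k = (W.mulVec (V i)) j := by
        simp [Matrix.mulVec, dotProduct]
      have h2 : E (V i) = M i - c := by
        rw [hV, hEval, LinearEquiv.symm_apply_apply]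
      rw [h1, hWmul, h2]
      simp
end

section
/- A matrix is a slack matrix of a polyhedral cone if and only if it is a slack matrix of some pointed polyhedral cone (a polyhedral cone whose lineality space is {0}). -/
open Matrix Set

/-- `M` is a slack matrix of some pointed polyhedral cone. -/
def IsSlackMatrixOfPointedCone {p q : ℕ} (M : Matrix (Fin p) (Fin q) ℝ) : Prop :=
  ∃ (n : ℕ) (A : Matrix (Fin p) (Fin n) ℝ) (B : Matrix (Fin n) (Fin q) ℝ),
    {x : Fin n → ℝ | 0 ≤ Matrix.vecMul x B} = coneOfRows A ∧ M = A * B ∧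
      IsPointedCone (coneOfRows A)

lemma vecMul_eq_sum_smul_s8 {m n : ℕ} (v : Fin m → ℝ) (A : Matrix (Fin m) (Fin n) ℝ) :
    Matrix.vecMul v A = ∑ i, v i • A i := by
  funext j
  simp [Matrix.vecMul, dotProduct, Finset.sum_apply]

/-- **Lemma.** A matrix is a slack matrix of a polyhedral cone if and only if it
is a slack matrix of some pointed polyhedral cone. -/
theorem slack_matrix_of_cone_iff_pointed_cone {p q : ℕ}
    (M : Matrix (Fin p) (Fin q) ℝ) :
    IsSlackMatrixOfCone M ↔ IsSlackMatrixOfPointedCone M := by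
  constructor
  · rintro ⟨n, A, B, hKB, hM⟩
    classical
    set S : Submodule ℝ (Fin q → ℝ) := LinearMap.range (Matrix.vecMulLinear B) with hSdef
    have hSmem : ∀ x : Fin n → ℝ, Matrix.vecMul x B ∈ S := fun x =>
      ⟨x, Matrix.vecMulLinear_apply B x⟩
    -- rows of M are vecMul (A i) B
    have hMrow : ∀ i, M i = Matrix.vecMul (A i) B := by
      intro i; funext j
      simp [hM, Matrix.mul_apply, Matrix.vecMul, dotProduct]
    have hMmemS : ∀ i, M i ∈ S := fun i => (hMrow i) ▸ hSmem (A i)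
    -- Claim 1: z ∈ S ∧ 0 ≤ z ↔ z ∈ coneOfRows M
    have claim1 : ∀ z : Fin q → ℝ, (z ∈ S ∧ 0 ≤ z) ↔ z ∈ coneOfRows M := by
      intro z
      constructor
      · rintro ⟨⟨x, hx⟩, hz0⟩
        rw [Matrix.vecMulLinear_apply] at hx
        have hxK : x ∈ coneOfRows A := by
          rw [← hKB]; show 0 ≤ Matrix.vecMul x B; rw [hx]; exact hz0
        obtain ⟨c, hc0, hcx⟩ := hxK
        exact ⟨c, hc0, by rw [← hx, hcx, Matrix.vecMul_vecMul, ← hM]⟩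
      · rintro ⟨c, hc0, hcz⟩
        have hcA : Matrix.vecMul c A ∈ coneOfRows A := ⟨c, hc0, rfl⟩
        rw [← hKB] at hcA
        have hz : z = Matrix.vecMul (Matrix.vecMul c A) B := by
          rw [Matrix.vecMul_vecMul, ← hM, hcz]
        exact ⟨hz ▸ hSmem _, hz ▸ hcA⟩
    -- the basis of S
    set r : ℕ := Module.finrank ℝ S with hr
    let bS : Module.Basis (Fin r) ℝ S := Module.finBasis ℝ S
    set U : Matrix (Fin r) (Fin q) ℝ := Matrix.of (fun k => (bS k : Fin q → ℝ)) with hU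
    have hUmem : ∀ k, U k ∈ S := fun k => (bS k).2
    -- vecMul into S
    have hvecS : ∀ y : Fin r → ℝ, Matrix.vecMul y U ∈ S := by
      intro y
      rw [vecMul_eq_sum_smul_s8]
      exact Submodule.sum_mem S fun k _ => S.smul_mem _ (hUmem k)
    -- injectivity
    have hUli : LinearIndependent ℝ (fun k => U k) := by
      have := bS.linearIndependent.map' S.subtype S.ker_subtype
      exact this
    have hinj : ∀ y : Fin r → ℝ, Matrix.vecMul y U = 0 → y = 0 := by
      intro y hy
      funext k
      exact Fintype.linearIndependent_iff.mp hUli y (by rw [← vecMul_eq_sum_smul_s8, hy]) k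
    -- A'
    set A' : Matrix (Fin p) (Fin r) ℝ :=
      Matrix.of (fun i k => (bS.repr ⟨M i, hMmemS i⟩) k) with hA'
    have hA'U : ∀ i, Matrix.vecMul (A' i) U = M i := by
      intro i
      have h := bS.sum_repr ⟨M i, hMmemS i⟩
      have h2 := congrArg (Subtype.val : S → (Fin q → ℝ)) h
      rw [vecMul_eq_sum_smul_s8]
      simp only [Submodule.coe_sum, Submodule.coe_smul] at h2
      exact h2
    have hMA'U : M = A' * U := by
      funext i j
      have := congrFun (hA'U i) j
      simpa [Matrix.mul_apply, Matrix.vecMul, dotProduct] using this.symm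
    -- main set equality
    have hmain : {y : Fin r → ℝ | 0 ≤ Matrix.vecMul y U} = coneOfRows A' := by
      ext y
      constructor
      · intro hy
        obtain ⟨c, hc0, hcz⟩ := (claim1 (Matrix.vecMul y U)).mp ⟨hvecS y, hy⟩
        have heq : y = Matrix.vecMul c A' := by
          have h0 : Matrix.vecMul (y - Matrix.vecMul c A') U = 0 := by
            rw [Matrix.sub_vecMul, Matrix.vecMul_vecMul, ← hMA'U, ← hcz, sub_self]
          exact sub_eq_zero.mp (hinj _ h0)
        exact ⟨c, hc0, heq⟩
      · rintro ⟨c, hc0, hcy⟩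
        have : Matrix.vecMul y U = Matrix.vecMul c M := by
          rw [hcy, Matrix.vecMul_vecMul, ← hMA'U]
        have hmem : Matrix.vecMul c M ∈ coneOfRows M := ⟨c, hc0, rfl⟩
        have := ((claim1 _).mpr hmem).2
        show 0 ≤ Matrix.vecMul y U
        rw [hcy, Matrix.vecMul_vecMul, ← hMA'U]
        exact this
    refine ⟨r, A', U, hmain, hMA'U, ?_⟩
    -- pointedness
    intro y hy hny
    rw [← hmain] at hy hny
    have h1 : 0 ≤ Matrix.vecMul y U := hy
    have h2 : 0 ≤ -Matrix.vecMul y U := by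
      have := hny
      rwa [Set.mem_setOf_eq, Matrix.neg_vecMul] at this
    exact hinj y (le_antisymm (by simpa using neg_nonneg.mp (by simpa using h2)) h1)
  · rintro ⟨n, A, B, h1, h2, _⟩
    exact ⟨n, A, B, h1, h2⟩
end

section
/- A polyhedral cone K is pointed if and only if dim(K) = rank(S) for any slack matrix S of K; that is, for every slack matrix S of a polyhedral cone K, the dimension of the linear hull of K equals rank(S) exactly when the lineality space of K is {0}. -/
open Matrix Set

set_option synthInstance.maxHeartbeats 1000000 in
/-- **Lemma.** A polyhedral cone `K` is pointed if and only if
`dim K = rank S` for any slack matrix `S` of `K`. -/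
theorem pointed_iff_coneDim_eq_rank {n p q : ℕ} (K : Set (Fin n → ℝ))
    (S : Matrix (Fin p) (Fin q) ℝ)
    (A : Matrix (Fin p) (Fin n) ℝ) (B : Matrix (Fin n) (Fin q) ℝ)
    (hS : IsSlackMatrixOfConeRep S K A B) :
    IsPointedCone K ↔ coneDim K = S.rank := by
  obtain ⟨hK1, hK2, hAB⟩ := hS
  set f := A.vecMulLinear with hf
  set g := B.vecMulLinear with hg
  -- ker g ≤ range f
  have hker : LinearMap.ker g ≤ LinearMap.range f := by
    intro x hx
    have hx0 : Matrix.vecMul x B = 0 := hx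
    have hxK : x ∈ K := by
      rw [hK1]; simp only [Set.mem_setOf_eq, hx0, le_refl]
    rw [hK2] at hxK
    obtain ⟨y, _, rfl⟩ := hxK
    exact ⟨y, rfl⟩
  -- span K = range f
  have hspan : Submodule.span ℝ K = LinearMap.range f := by
    apply le_antisymm
    · rw [Submodule.span_le, hK2]
      rintro x ⟨y, _, rfl⟩
      exact ⟨y, rfl⟩
    · rw [hf, range_vecMulLinear, Submodule.span_le]
      rintro x ⟨i, rfl⟩
      apply Submodule.subset_span
      rw [hK2]
      refine ⟨Pi.single i 1, ?_, ?_⟩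
      · intro j
        by_cases h : j = i <;> simp [h, Pi.single_apply]
      · simp [Matrix.single_vecMul]
  -- coneDim K = finrank (range f)
  have hdim : coneDim K = Module.finrank ℝ (LinearMap.range f) := by
    rw [coneDim, hspan]
  -- rank S = finrank (range (g ∘ f))
  have hcomp : S.vecMulLinear = g ∘ₗ f := by
    apply LinearMap.ext
    intro x
    show Matrix.vecMul x S = Matrix.vecMul (Matrix.vecMul x A) B
    rw [hAB, Matrix.vecMul_vecMul]
  have hrank : S.rank = Module.finrank ℝ (LinearMap.range (g ∘ₗ f)) := by
    rw [← Matrix.rank_transpose, Matrix.rank, Matrix.mulVecLin_transpose, hcomp]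
  -- rank-nullity for g restricted to range f
  have hrn : Module.finrank ℝ (LinearMap.range f)
      = Module.finrank ℝ ((LinearMap.range f).map g)
        + Module.finrank ℝ (LinearMap.ker g) := by
    have h1 := LinearMap.finrank_range_add_finrank_ker (g.domRestrict (LinearMap.range f))
    rw [LinearMap.range_domRestrict, LinearMap.ker_domRestrict] at h1
    rw [← h1]
    congr 1
    exact (Submodule.comapSubtypeEquivOfLe hker).finrank_eq
  have hmap : LinearMap.range (g ∘ₗ f) = (LinearMap.range f).map g :=
    LinearMap.range_comp f g
  -- pointed ↔ ker g = ⊥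
  have hpt : IsPointedCone K ↔ LinearMap.ker g = ⊥ := by
    constructor
    · intro h
      rw [eq_bot_iff]
      intro x hx
      have hx0 : Matrix.vecMul x B = 0 := hx
      have hxK : x ∈ K := by rw [hK1]; simp only [Set.mem_setOf_eq, hx0, le_refl]
      have hxK' : -x ∈ K := by
        rw [hK1]; simp only [Set.mem_setOf_eq, Matrix.neg_vecMul, hx0, neg_zero, le_refl]
      simpa using h x hxK hxK'
    · intro h x hx hx'
      rw [hK1] at hx hx'
      have h1 : (0 : Fin q → ℝ) ≤ Matrix.vecMul x B := hx
      have h2 : (0 : Fin q → ℝ) ≤ Matrix.vecMul (-x) B := hx'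
      rw [Matrix.neg_vecMul] at h2
      have h0 : Matrix.vecMul x B = 0 := le_antisymm (by simpa using neg_nonneg.mp (by simpa using h2)) h1
      have : x ∈ LinearMap.ker g := h0
      rw [h] at this
      simpa using this
  rw [hpt, hdim, hrank, hmap, hrn]
  constructor
  · intro h
    rw [h]
    simp
  · intro h
    have : Module.finrank ℝ (LinearMap.ker g) = 0 := by omega
    exact Submodule.finrank_eq_zero.mp this
end

section
/- If S is a slack matrix of a polytope P, then P is affinely isomorphic to conv(rows(S)), the convex hull of the rows of S; in particular dim(P) = rank(S) − 1. -/
open Matrix Set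

lemma aux_no_ray {n : ℕ} {P : Set (Fin n → ℝ)} (hb : Bornology.IsBounded P)
    {u d : Fin n → ℝ} (hd : d ≠ 0) (h : ∀ t : ℝ, 0 ≤ t → u + t • d ∈ P) : False := by
  obtain ⟨C, hC⟩ := hb.exists_norm_le
  have hdpos : (0:ℝ) < ‖d‖ := norm_pos_iff.mpr hd
  set t : ℝ := (C + ‖u‖ + 1) / ‖d‖ with ht
  have ht0 : 0 ≤ t := by
    have h1 : ‖u + (0:ℝ) • d‖ ≤ C := hC _ (h 0 le_rfl)
    have : 0 ≤ C := le_trans (norm_nonneg _) (by simpa using h1)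
    positivity
  have hmem := hC _ (h t ht0)
  have : t * ‖d‖ ≤ ‖u + t • d‖ + ‖u‖ := by
    calc t * ‖d‖ = ‖t • d‖ := by rw [norm_smul, Real.norm_eq_abs, abs_of_nonneg ht0]
    _ = ‖(u + t • d) - u‖ := by rw [add_sub_cancel_left]
    _ ≤ ‖u + t • d‖ + ‖u‖ := norm_sub_le _ _
  have htd : t * ‖d‖ = C + ‖u‖ + 1 := div_mul_cancel₀ _ (ne_of_gt hdpos)
  linarith

lemma aux_span_vectorSpan {q : ℕ} (s : Set (Fin q → ℝ)) (hne : s.Nonempty)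
    (h0 : (0 : Fin q → ℝ) ∉ affineSpan ℝ s) :
    Module.finrank ℝ (Submodule.span ℝ s) = Module.finrank ℝ (vectorSpan ℝ s) + 1 := by
  obtain ⟨x0, hx0⟩ := hne
  have hx0span : x0 ∈ affineSpan ℝ s := subset_affineSpan ℝ s hx0
  have hx0v : x0 ∉ vectorSpan ℝ s := by
    intro hx
    have : (-x0) +ᵥ x0 ∈ affineSpan ℝ s := by
      refine AffineSubspace.vadd_mem_of_mem_direction ?_ hx0span
      rw [direction_affineSpan]
      exact neg_mem hx
    simp at this
    exact h0 this
  have hx0ne : x0 ≠ 0 := by rintro rfl; exact h0 hx0span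
  have hsp : Submodule.span ℝ s = vectorSpan ℝ s ⊔ Submodule.span ℝ {x0} := by
    apply le_antisymm
    · rw [Submodule.span_le]
      intro y hy
      have : y = (y - x0) + x0 := by ring
      rw [this]
      exact Submodule.add_mem_sup (vsub_mem_vectorSpan ℝ hy hx0)
        (Submodule.mem_span_singleton_self x0)
    · refine sup_le ?_ ?_
      · rw [vectorSpan, Submodule.span_le]
        rintro y ⟨a, ha, b, hb, rfl⟩
        exact sub_mem (Submodule.subset_span ha) (Submodule.subset_span hb)
      · rw [Submodule.span_le, Set.singleton_subset_iff]
        exact Submodule.subset_span hx0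
  have hinf : vectorSpan ℝ s ⊓ Submodule.span ℝ {x0} = ⊥ := by
    rw [Submodule.eq_bot_iff]
    rintro y ⟨hy1, hy2⟩
    obtain ⟨c, rfl⟩ := Submodule.mem_span_singleton.mp hy2
    rcases eq_or_ne c 0 with rfl | hc
    · simp
    · exfalso
      apply hx0v
      have := Submodule.smul_mem (vectorSpan ℝ s) c⁻¹ hy1
      rwa [inv_smul_smul₀ hc] at this
  have := Submodule.finrank_sup_add_finrank_inf_eq (vectorSpan ℝ s) (Submodule.span ℝ {x0})
  rw [hinf, ← hsp, finrank_span_singleton hx0ne] at this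
  simpa using this

/-- **Theorem.** If `S` is a slack matrix of the polytope `P`, then `P` is
affinely isomorphic to `conv(rows S)`; in particular `dim P = rank S - 1`. -/
theorem polytope_iso_conv_rows_slack {n p q : ℕ} (P : Set (Fin n → ℝ))
    (S : Matrix (Fin p) (Fin q) ℝ) (hS : IsSlackMatrixOfPolytopeOn S P) :
    (∃ f : (Fin n → ℝ) →ᵃ[ℝ] (Fin q → ℝ), Function.Injective f ∧
        f '' P = convexHull ℝ (Set.range fun i => S i)) ∧
      affDim P = S.rank - 1 := by
  obtain ⟨V, W, w, hPV, hPW, ⟨u0, hu0, v0, hv0, huv⟩, hSij⟩ := hS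
  have hb : Bornology.IsBounded P := by
    rw [hPV, rowsConv]
    exact isBounded_convexHull.mpr (Set.finite_range _).isBounded
  -- the affine map
  set f : (Fin n → ℝ) →ᵃ[ℝ] (Fin q → ℝ) :=
    { toFun := fun x => w - W.mulVec x
      linear := -W.mulVecLin
      map_vadd' := by
        intro pt v
        show w - W.mulVec (v + pt) = (-W.mulVecLin) v + (w - W.mulVec pt)
        simp [Matrix.mulVec_add]
        abel } with hf
  have hfapp : ∀ x, f x = w - W.mulVec x := fun x => rfl
  have hrow : ∀ i, f (V i) = S i := by
    intro i
    funext j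
    show w j - W.mulVec (V i) j = S i j
    rw [hSij]
    simp [Matrix.mulVec, dotProduct]
  -- kernel of W is trivial
  have hWker : ∀ z, W.mulVec z = 0 → z = 0 := by
    intro z hz
    by_contra hzne
    refine aux_no_ray hb hzne (u := u0) ?_
    intro t ht
    rw [hPW]
    show W.mulVec (u0 + t • z) ≤ w
    have : W.mulVec (u0 + t • z) = W.mulVec u0 := by
      rw [Matrix.mulVec_add, Matrix.mulVec_smul, hz]
      simp
    rw [this]
    have := hPW ▸ hu0
    exact this
  have hlinj : Function.Injective (f.linear) := by
    intro x y hxy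
    have hx : f.linear x = -(W.mulVec x) := by simp [hf]
    have hy : f.linear y = -(W.mulVec y) := by simp [hf]
    rw [hx, hy, neg_inj] at hxy
    have : W.mulVec (x - y) = 0 := by rw [Matrix.mulVec_sub, hxy, sub_self]
    exact sub_eq_zero.mp (hWker _ this)
  have hinj : Function.Injective f := by
    intro x y hxy
    have : f.linear (x - y) = f x - f y := by
      simp [hf, Matrix.mulVec_sub]
    rw [hxy, sub_self] at this
    have h2 := hlinj (a₁ := x - y) (a₂ := 0) (by simpa using this)
    exact sub_eq_zero.mp h2
  -- image of rows
  have himrange : f '' (Set.range fun i => V i) = Set.range fun i => S i := by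
    rw [← Set.range_comp]
    exact congrArg Set.range (funext fun i => hrow i)
  have himg : f '' P = convexHull ℝ (Set.range fun i => S i) := by
    rw [hPV, rowsConv, AffineMap.image_convexHull, himrange]
  refine ⟨⟨f, hinj, himg⟩, ?_⟩
  -- nonemptiness of rows
  have hVne : (Set.range fun i => V i).Nonempty := by
    rw [hPV, rowsConv] at hu0
    exact convexHull_nonempty_iff.mp ⟨u0, hu0⟩
  have hSne : (Set.range fun i => S i).Nonempty := by
    obtain ⟨_, i, _⟩ := hVne
    exact ⟨S i, i, rfl⟩
  -- affine span relation
  have hspanmap : (affineSpan ℝ (Set.range fun i => V i)).map f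
      = affineSpan ℝ (Set.range fun i => S i) := by
    rw [AffineSubspace.map_span, himrange]
  -- 0 not in affine span of rows of S
  have h0 : (0 : Fin q → ℝ) ∉ affineSpan ℝ (Set.range fun i => S i) := by
    intro h0
    rw [← hspanmap, AffineSubspace.mem_map] at h0
    obtain ⟨u, hu, hfu⟩ := h0
    have hWu : W.mulVec u = w := by
      have : w - W.mulVec u = 0 := hfu
      funext j
      have := congrFun this j
      simpa [sub_eq_zero] using (sub_eq_zero.mp this).symm
    have huP : u ∈ P := by rw [hPW]; exact le_of_eq hWu
    obtain ⟨v, hvP, hvu⟩ : ∃ v ∈ P, v ≠ u := by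
      rcases eq_or_ne u0 u with rfl | h
      · exact ⟨v0, hv0, fun hh => huv hh.symm⟩
      · exact ⟨u0, hu0, h⟩
    refine aux_no_ray hb (d := v - u) (sub_ne_zero.mpr hvu) (u := u) ?_
    intro t ht
    rw [hPW]
    show W.mulVec (u + t • (v - u)) ≤ w
    intro j
    have hcalc : W.mulVec (u + t • (v - u)) j
        = w j + t * (W.mulVec v j - w j) := by
      rw [Matrix.mulVec_add, Matrix.mulVec_smul, Matrix.mulVec_sub, hWu]
      simp [mul_sub]
    have hvle : W.mulVec v j ≤ w j := (hPW ▸ hvP) j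
    have : t * (W.mulVec v j - w j) ≤ 0 :=
      mul_nonpos_of_nonneg_of_nonpos ht (sub_nonpos.mpr hvle)
    rw [hcalc]
    linarith
  -- rank computation
  have hrank : S.rank = Module.finrank ℝ (Submodule.span ℝ (Set.range fun i => S i)) := by
    rw [Matrix.rank_eq_finrank_span_row]
    rfl
  have hdir : Module.finrank ℝ (vectorSpan ℝ (Set.range fun i => S i)) = affDim P := by
    have h1 : affineSpan ℝ P = affineSpan ℝ (Set.range fun i => V i) := by
      rw [hPV, rowsConv, affineSpan_convexHull]
    have h2 : vectorSpan ℝ (Set.range fun i => S i)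
        = ((affineSpan ℝ (Set.range fun i => V i)).direction).map f.linear := by
      rw [← direction_affineSpan, ← hspanmap, AffineSubspace.map_direction]
    rw [h2]
    unfold affDim
    rw [h1]
    exact (Submodule.equivMapOfInjective f.linear hlinj _).finrank_eq.symm
  have key : S.rank = affDim P + 1 := by
    rw [hrank, aux_span_vectorSpan _ hSne h0, hdir]
  omega
end
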